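/- arXiv:1004.1666 — 6 statements merged into one kernel-verified Lean document; each statement's English description precedes it below -/
import Mathlib

section
/- Let X be a finite metric space and let 𝒳, 𝒴, 𝒵 be families of finite metric spaces, and let α, β ≥ 1. Suppose X admits a stochastic α-embedding into ⊕₁(𝒳 ∪ 𝒴), and every member of 𝒳 admits a stochastic β-embedding into 𝒵. Then X admits a stochastic (α·β)-embedding into ⊕₁(𝒵 ∪ 𝒴). -/
open Set

noncomputable section

/-- A bundled finite metric space. -/
structure FinMetric where
  carrier : Type
  fintype : Fintype carrier
  metric : MetricSpace carrier

/-- The distance function of a bundled finite metric space. -/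
def FinMetric.dist (Y : FinMetric) (x y : Y.carrier) : ℝ :=
  @Dist.dist Y.carrier Y.metric.toDist x y

/-- `StochEmbed X dX 𝒴 D`: the metric space `(X, dX)` admits a stochastic `D`-embedding
into the family `𝒴` of finite metric spaces, i.e. there are finitely many spaces
`Y i ∈ 𝒴`, non-contracting maps `f i : X → Y i` and weights `p i ≥ 0` summing to `1`
such that `∑ i, p i * dist (f i x) (f i y) ≤ D * dX x y` for all `x y`. -/
def StochEmbed (X : Type) (dX : X → X → ℝ) (𝒴 : Set FinMetric) (D : ℝ) : Prop :=
  ∃ (N : ℕ) (Y : Fin N → FinMetric) (f : ∀ i, X → (Y i).carrier) (p : Fin N → ℝ),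
    (∀ i, Y i ∈ 𝒴) ∧ (∀ i, 0 ≤ p i) ∧ (∑ i, p i) = 1 ∧
    (∀ i (x y : X), dX x y ≤ (Y i).dist (f i x) (f i y)) ∧
    (∀ x y : X, (∑ i, p i * (Y i).dist (f i x) (f i y)) ≤ D * dX x y)

/-- The four-point condition: `Y` is a tree metric. -/
def FourPoint (Y : FinMetric) : Prop :=
  ∀ w x y z : Y.carrier,
    Y.dist w x + Y.dist y z ≤ max (Y.dist w y + Y.dist x z) (Y.dist w z + Y.dist x y)

/-- The family of finite tree metrics. -/
def TreeMetrics : Set FinMetric := {Y | FourPoint Y}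

/-- `IsOneSum Z Y₁ Y₂`: `Z` is (isometric to) a 1-sum of `Y₁` and `Y₂`: it is obtained
from the disjoint union of `Y₁` and `Y₂` by identifying a basepoint `v₁ ∈ Y₁` with a
basepoint `v₂ ∈ Y₂`, distances within each part being unchanged, and
`dist x y = d₁ x v₁ + d₂ v₂ y` for `x ∈ Y₁`, `y ∈ Y₂`. -/
def IsOneSum (Z Y₁ Y₂ : FinMetric) : Prop :=
  ∃ (g₁ : Y₁.carrier → Z.carrier) (g₂ : Y₂.carrier → Z.carrier)
    (v₁ : Y₁.carrier) (v₂ : Y₂.carrier),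
    Function.Injective g₁ ∧ Function.Injective g₂ ∧
    (∀ z : Z.carrier, (∃ x, g₁ x = z) ∨ (∃ y, g₂ y = z)) ∧
    g₁ v₁ = g₂ v₂ ∧
    (∀ x y, g₁ x = g₂ y → x = v₁ ∧ y = v₂) ∧
    (∀ x y, Z.dist (g₁ x) (g₁ y) = Y₁.dist x y) ∧
    (∀ x y, Z.dist (g₂ x) (g₂ y) = Y₂.dist x y) ∧
    (∀ x y, Z.dist (g₁ x) (g₂ y) = Y₁.dist x v₁ + Y₂.dist v₂ y)

/-- `OneSumClosure 𝒳` is the smallest family of finite metric spaces containing `𝒳`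
and closed under taking 1-sums (denoted `⊕₁𝒳`). -/
inductive OneSumClosure (𝒳 : Set FinMetric) : FinMetric → Prop
  | base {Y : FinMetric} : Y ∈ 𝒳 → OneSumClosure 𝒳 Y
  | sum {Y₁ Y₂ Z : FinMetric} :
      OneSumClosure 𝒳 Y₁ → OneSumClosure 𝒳 Y₂ → IsOneSum Z Y₁ Y₂ → OneSumClosure 𝒳 Z

/-!
A 1-sum of `Y₁` and `Y₂` at `v₁ ~ v₂` is an isometric image of the cross
`Y₁ × {v₂} ∪ {v₁} × Y₂` in the `ℓ¹`-product, and maps `φ : Y₁ → Z₁`, `ψ : Y₂ → Z₂` act on such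
crosses coordinatewise, adding the two distances. So stochastic embeddings of the two pieces,
drawn independently, glue to a stochastic embedding of the 1-sum with the same distortion.
By induction on `⊕₁(𝒳 ∪ 𝒴)` every member `β`-embeds into `⊕₁(𝒵 ∪ 𝒴)` (a member of `𝒴` by the
identity, as `β ≥ 1`), and composing with the `α`-embedding of `X` multiplies the distortions.
-/

attribute [instance] FinMetric.fintype FinMetric.metric

theorem FinMetric.dist_eq (Y : FinMetric) (x y : Y.carrier) : Y.dist x y = Dist.dist x y := rfl

section StochEmbed

variable {X X' : Type} {dX : X → X → ℝ} {dX' : X' → X' → ℝ} {𝒴 𝒵 : Set FinMetric} {D E : ℝ}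

theorem StochEmbed.of_fintype (ι : Type) [Fintype ι] (Y : ι → FinMetric)
    (f : ∀ i, X → (Y i).carrier) (p : ι → ℝ) (hY : ∀ i, Y i ∈ 𝒴) (hp : ∀ i, 0 ≤ p i)
    (hsum : ∑ i, p i = 1) (hf : ∀ i x y, dX x y ≤ (Y i).dist (f i x) (f i y))
    (hD : ∀ x y, ∑ i, p i * (Y i).dist (f i x) (f i y) ≤ D * dX x y) :
    StochEmbed X dX 𝒴 D := by
  let e := (Fintype.equivFin ι).symm
  refine ⟨Fintype.card ι, Y ∘ e, fun k => f (e k), p ∘ e, fun k => hY _, fun k => hp _, ?_,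
    fun k => hf _, fun x y => ?_⟩
  · rwa [Function.comp_def, e.sum_comp p]
  · simpa only [Function.comp_apply, e.sum_comp fun i => p i * (Y i).dist (f i x) (f i y)]
      using hD x y

theorem StochEmbed.mono (h : StochEmbed X dX 𝒴 D) (h𝒴 : 𝒴 ⊆ 𝒵) : StochEmbed X dX 𝒵 D := by
  obtain ⟨N, Y, f, p, hY, hp, hsum, hf, hD⟩ := h
  exact ⟨N, Y, f, p, fun i => h𝒴 (hY i), hp, hsum, hf, hD⟩

theorem stochEmbed_self {Y : FinMetric} (hY : Y ∈ 𝒴) (hD : 1 ≤ D) :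
    StochEmbed Y.carrier Y.dist 𝒴 D := by
  refine ⟨1, fun _ => Y, fun _ => id, fun _ => 1, fun _ => hY, fun _ => zero_le_one,
    by simp, fun _ _ _ => le_rfl, fun x y => ?_⟩
  simpa [FinMetric.dist_eq] using le_mul_of_one_le_left (dist_nonneg (x := x) (y := y)) hD

theorem StochEmbed.of_surjective {j : X' → X} (hj : Function.Surjective j)
    (hd : ∀ a b, dX (j a) (j b) = dX' a b) (h : StochEmbed X' dX' 𝒴 D) :
    StochEmbed X dX 𝒴 D := by
  obtain ⟨N, Y, f, p, hY, hp, hsum, hf, hD⟩ := h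
  have hd' : ∀ x y, dX x y = dX' (Function.surjInv hj x) (Function.surjInv hj y) := by
    intro x y
    rw [← hd, Function.surjInv_eq hj, Function.surjInv_eq hj]
  refine ⟨N, Y, fun i x => f i (Function.surjInv hj x), p, hY, hp, hsum, ?_, ?_⟩
  · intro i x y
    rw [hd']
    exact hf i _ _
  · intro x y
    rw [hd']
    exact hD _ _

theorem StochEmbed.trans (h : StochEmbed X dX 𝒴 D)
    (h𝒴 : ∀ Y ∈ 𝒴, StochEmbed Y.carrier Y.dist 𝒵 E) (hE : 0 ≤ E) :
    StochEmbed X dX 𝒵 (D * E) := by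
  obtain ⟨N, Y, f, p, hY, hp, hsum, hf, hD⟩ := h
  choose M Z g q hZ hq hqsum hg hE' using fun i => h𝒴 (Y i) (hY i)
  refine StochEmbed.of_fintype ((i : Fin N) × Fin (M i)) (fun ik => Z ik.1 ik.2)
    (fun ik x => g ik.1 ik.2 (f ik.1 x)) (fun ik => p ik.1 * q ik.1 ik.2)
    (fun ik => hZ ik.1 ik.2) (fun ik => mul_nonneg (hp ik.1) (hq ik.1 ik.2)) ?_
    (fun ik x y => (hf ik.1 x y).trans (hg ik.1 ik.2 _ _)) fun x y => ?_
  · simp only [Fintype.sum_sigma, ← Finset.mul_sum, hqsum, mul_one, hsum]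
  · calc ∑ ik : (i : Fin N) × Fin (M i),
          p ik.1 * q ik.1 ik.2 *
            (Z ik.1 ik.2).dist (g ik.1 ik.2 (f ik.1 x)) (g ik.1 ik.2 (f ik.1 y))
        = ∑ i, p i * ∑ k, q i k * (Z i k).dist (g i k (f i x)) (g i k (f i y)) := by
          simp only [Fintype.sum_sigma, Finset.mul_sum, mul_assoc]
      _ ≤ ∑ i, p i * (E * (Y i).dist (f i x) (f i y)) :=
          Finset.sum_le_sum fun i _ => mul_le_mul_of_nonneg_left (hE' i _ _) (hp i)
      _ = E * ∑ i, p i * (Y i).dist (f i x) (f i y) := by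
          rw [Finset.mul_sum]
          exact Finset.sum_congr rfl fun i _ => by ring
      _ ≤ E * (D * dX x y) := mul_le_mul_of_nonneg_left (hD x y) hE
      _ = D * E * dX x y := by ring

end StochEmbed

section Wedge

variable (Z₁ Z₂ : FinMetric) (w₁ : Z₁.carrier) (w₂ : Z₂.carrier)

/-- The 1-sum of `Z₁` and `Z₂` at `w₁ ~ w₂`, realised as the subset
`Z₁ × {w₂} ∪ {w₁} × Z₂` of the `ℓ¹`-product. -/
def wedge : FinMetric where
  carrier := {x : Z₁.carrier × Z₂.carrier // x.1 = w₁ ∨ x.2 = w₂}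
  fintype := Fintype.ofFinite _
  metric := MetricSpace.induced (fun x => WithLp.toLp 1 x.1)
    ((WithLp.toLp_injective 1).comp Subtype.val_injective) inferInstance

variable {Z₁ Z₂ w₁ w₂}

def wedge.inl (a : Z₁.carrier) : (wedge Z₁ Z₂ w₁ w₂).carrier := ⟨(a, w₂), Or.inr rfl⟩

def wedge.inr (b : Z₂.carrier) : (wedge Z₁ Z₂ w₁ w₂).carrier := ⟨(w₁, b), Or.inl rfl⟩

theorem wedge.exists_inl_or_exists_inr (x : (wedge Z₁ Z₂ w₁ w₂).carrier) :
    (∃ a, wedge.inl a = x) ∨ ∃ b, wedge.inr b = x := by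
  obtain ⟨⟨a, b⟩, rfl | rfl⟩ := x
  · exact Or.inr ⟨b, rfl⟩
  · exact Or.inl ⟨a, rfl⟩

theorem wedge.dist_eq (x y : (wedge Z₁ Z₂ w₁ w₂).carrier) :
    (wedge Z₁ Z₂ w₁ w₂).dist x y = Z₁.dist x.1.1 y.1.1 + Z₂.dist x.1.2 y.1.2 :=
  (WithLp.prod_dist_eq_add (p := 1) (by norm_num) (WithLp.toLp 1 x.1) (WithLp.toLp 1 y.1)).trans
    (by simp [FinMetric.dist_eq])

theorem wedge.dist_inl_inl (a a' : Z₁.carrier) :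
    (wedge Z₁ Z₂ w₁ w₂).dist (wedge.inl a) (wedge.inl a') = Z₁.dist a a' := by
  rw [wedge.dist_eq]
  simp [wedge.inl, FinMetric.dist_eq]

theorem wedge.dist_inr_inr (b b' : Z₂.carrier) :
    (wedge Z₁ Z₂ w₁ w₂).dist (wedge.inr b) (wedge.inr b') = Z₂.dist b b' := by
  rw [wedge.dist_eq]
  simp [wedge.inr, FinMetric.dist_eq]

theorem wedge.dist_inl_inr (a : Z₁.carrier) (b : Z₂.carrier) :
    (wedge Z₁ Z₂ w₁ w₂).dist (wedge.inl a) (wedge.inr b) = Z₁.dist a w₁ + Z₂.dist w₂ b :=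
  wedge.dist_eq _ _

theorem isOneSum_wedge : IsOneSum (wedge Z₁ Z₂ w₁ w₂) Z₁ Z₂ := by
  refine ⟨wedge.inl, wedge.inr, w₁, w₂, fun a a' h => congrArg (fun x => x.1.1) h,
    fun b b' h => congrArg (fun x => x.1.2) h, wedge.exists_inl_or_exists_inr, rfl,
    fun a b h => ?_, wedge.dist_inl_inl, wedge.dist_inr_inr, wedge.dist_inl_inr⟩
  have := congrArg Subtype.val h
  simp only [wedge.inl, wedge.inr, Prod.mk.injEq] at this
  exact ⟨this.1, this.2.symm⟩

end Wedge

section WedgeMap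

variable {Y₁ Y₂ Z₁ Z₂ : FinMetric} {v₁ : Y₁.carrier} {v₂ : Y₂.carrier}

def wedgeMap (φ : Y₁.carrier → Z₁.carrier) (ψ : Y₂.carrier → Z₂.carrier)
    (x : (wedge Y₁ Y₂ v₁ v₂).carrier) : (wedge Z₁ Z₂ (φ v₁) (ψ v₂)).carrier :=
  ⟨(φ x.1.1, ψ x.1.2), x.2.imp (congrArg φ) (congrArg ψ)⟩

theorem dist_wedgeMap (φ : Y₁.carrier → Z₁.carrier) (ψ : Y₂.carrier → Z₂.carrier)
    (x y : (wedge Y₁ Y₂ v₁ v₂).carrier) :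
    (wedge Z₁ Z₂ (φ v₁) (ψ v₂)).dist (wedgeMap φ ψ x) (wedgeMap φ ψ y) =
      Z₁.dist (φ x.1.1) (φ y.1.1) + Z₂.dist (ψ x.1.2) (ψ y.1.2) :=
  wedge.dist_eq _ _

end WedgeMap

theorem Fintype.sum_prod_mul_mul_add {ι κ R : Type*} [Fintype ι] [Fintype κ] [CommSemiring R]
    {p : ι → R} {q : κ → R} (hp : ∑ i, p i = 1) (hq : ∑ j, q j = 1) (a : ι → R) (b : κ → R) :
    ∑ ij : ι × κ, p ij.1 * q ij.2 * (a ij.1 + b ij.2) = ∑ i, p i * a i + ∑ j, q j * b j := by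
  have expand : ∀ i j, p i * q j * (a i + b j) = p i * a i * q j + p i * (q j * b j) :=
    fun i j => by ring
  simp only [Fintype.sum_prod_type, expand, Finset.sum_add_distrib, ← Finset.mul_sum,
    ← Finset.sum_mul, hp, hq, mul_one, one_mul]

theorem stochEmbed_wedge {𝒵 : Set FinMetric} {D : ℝ}
    (h𝒵 : ∀ Z Z₁ Z₂, Z₁ ∈ 𝒵 → Z₂ ∈ 𝒵 → IsOneSum Z Z₁ Z₂ → Z ∈ 𝒵) {Y₁ Y₂ : FinMetric}
    (h₁ : StochEmbed Y₁.carrier Y₁.dist 𝒵 D) (h₂ : StochEmbed Y₂.carrier Y₂.dist 𝒵 D)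
    (v₁ : Y₁.carrier) (v₂ : Y₂.carrier) :
    StochEmbed (wedge Y₁ Y₂ v₁ v₂).carrier (wedge Y₁ Y₂ v₁ v₂).dist 𝒵 D := by
  obtain ⟨N₁, Z₁, f₁, p₁, hZ₁, hp₁, hsum₁, hf₁, hD₁⟩ := h₁
  obtain ⟨N₂, Z₂, f₂, p₂, hZ₂, hp₂, hsum₂, hf₂, hD₂⟩ := h₂
  refine StochEmbed.of_fintype (Fin N₁ × Fin N₂)
    (fun ij => wedge (Z₁ ij.1) (Z₂ ij.2) (f₁ ij.1 v₁) (f₂ ij.2 v₂))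
    (fun ij => wedgeMap (f₁ ij.1) (f₂ ij.2)) (fun ij => p₁ ij.1 * p₂ ij.2)
    (fun ij => h𝒵 _ _ _ (hZ₁ ij.1) (hZ₂ ij.2) isOneSum_wedge)
    (fun ij => mul_nonneg (hp₁ ij.1) (hp₂ ij.2)) ?_ (fun ij x y => ?_) fun x y => ?_
  · rw [Fintype.sum_prod_type, ← Fintype.sum_mul_sum, hsum₁, hsum₂, one_mul]
  · rw [dist_wedgeMap, wedge.dist_eq]
    exact add_le_add (hf₁ ij.1 _ _) (hf₂ ij.2 _ _)
  · have hsplit := Fintype.sum_prod_mul_mul_add hsum₁ hsum₂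
      (fun i => (Z₁ i).dist (f₁ i x.1.1) (f₁ i y.1.1))
      (fun j => (Z₂ j).dist (f₂ j x.1.2) (f₂ j y.1.2))
    have hdist (ij : Fin N₁ × Fin N₂) := dist_wedgeMap (f₁ ij.1) (f₂ ij.2) x y
    simp only [hdist]
    rw [hsplit, wedge.dist_eq, mul_add]
    exact add_le_add (hD₁ _ _) (hD₂ _ _)

theorem IsOneSum.exists_surjective_dist_eq {W Y₁ Y₂ : FinMetric} (h : IsOneSum W Y₁ Y₂) :
    ∃ (v₁ : Y₁.carrier) (v₂ : Y₂.carrier) (j : (wedge Y₁ Y₂ v₁ v₂).carrier → W.carrier),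
      Function.Surjective j ∧ ∀ x y, W.dist (j x) (j y) = (wedge Y₁ Y₂ v₁ v₂).dist x y := by
  classical
  obtain ⟨g₁, g₂, v₁, v₂, -, -, hcover, hglue, -, hd₁, hd₂, hd₁₂⟩ := h
  let j : (wedge Y₁ Y₂ v₁ v₂).carrier → W.carrier := fun x =>
    if x.1.1 = v₁ then g₂ x.1.2 else g₁ x.1.1
  have hj₁ (a : Y₁.carrier) : j (wedge.inl a) = g₁ a := by
    by_cases ha : a = v₁
    · simp [j, wedge.inl, ha, hglue]
    · simp [j, wedge.inl, ha]
  have hj₂ (b : Y₂.carrier) : j (wedge.inr b) = g₂ b := if_pos rfl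
  have hcross (a : Y₁.carrier) (b : Y₂.carrier) :
      W.dist (j (wedge.inl a)) (j (wedge.inr b)) =
        (wedge Y₁ Y₂ v₁ v₂).dist (wedge.inl a) (wedge.inr b) := by
    rw [hj₁, hj₂, hd₁₂, wedge.dist_inl_inr]
  refine ⟨v₁, v₂, j, fun z => ?_, fun x y => ?_⟩
  · rcases hcover z with ⟨a, rfl⟩ | ⟨b, rfl⟩
    · exact ⟨_, hj₁ a⟩
    · exact ⟨_, hj₂ b⟩
  · rcases wedge.exists_inl_or_exists_inr x with ⟨a, rfl⟩ | ⟨b, rfl⟩ <;>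
      rcases wedge.exists_inl_or_exists_inr y with ⟨a', rfl⟩ | ⟨b', rfl⟩
    · rw [hj₁, hj₁, hd₁, wedge.dist_inl_inl]
    · exact hcross a b'
    · exact (dist_comm _ _).trans ((hcross a' b).trans (dist_comm _ _))
    · rw [hj₂, hj₂, hd₂, wedge.dist_inr_inr]

theorem stochEmbed_of_isOneSum {𝒵 : Set FinMetric} {D : ℝ}
    (h𝒵 : ∀ Z Z₁ Z₂, Z₁ ∈ 𝒵 → Z₂ ∈ 𝒵 → IsOneSum Z Z₁ Z₂ → Z ∈ 𝒵) {W Y₁ Y₂ : FinMetric}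
    (hW : IsOneSum W Y₁ Y₂) (h₁ : StochEmbed Y₁.carrier Y₁.dist 𝒵 D)
    (h₂ : StochEmbed Y₂.carrier Y₂.dist 𝒵 D) : StochEmbed W.carrier W.dist 𝒵 D := by
  obtain ⟨v₁, v₂, j, hj, hd⟩ := hW.exists_surjective_dist_eq
  exact (stochEmbed_wedge h𝒵 h₁ h₂ v₁ v₂).of_surjective hj hd

theorem stochEmbed_of_oneSumClosure {𝒳 𝒴 𝒵 : Set FinMetric} {β : ℝ} (hβ : 1 ≤ β)
    (h𝒳 : ∀ Y ∈ 𝒳, StochEmbed Y.carrier Y.dist 𝒵 β) {W : FinMetric}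
    (hW : OneSumClosure (𝒳 ∪ 𝒴) W) :
    StochEmbed W.carrier W.dist {Z | OneSumClosure (𝒵 ∪ 𝒴) Z} β := by
  induction hW with
  | base hW =>
    rcases hW with hW | hW
    · exact (h𝒳 _ hW).mono fun Z hZ => OneSumClosure.base (Or.inl hZ)
    · exact stochEmbed_self (OneSumClosure.base (Or.inr hW)) hβ
  | sum _ _ hW ih₁ ih₂ =>
    exact stochEmbed_of_isOneSum (fun _ _ _ h₁ h₂ h => OneSumClosure.sum h₁ h₂ h) hW ih₁ ih₂

theorem statement1_general (X : Type) [MetricSpace X]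
    (𝒳 𝒴 𝒵 : Set FinMetric) (α β : ℝ) (hβ : 1 ≤ β)
    (hX : StochEmbed X dist {Z | OneSumClosure (𝒳 ∪ 𝒴) Z} α)
    (h𝒳 : ∀ Y ∈ 𝒳, StochEmbed Y.carrier Y.dist 𝒵 β) :
    StochEmbed X dist {Z | OneSumClosure (𝒵 ∪ 𝒴) Z} (α * β) :=
  hX.trans (fun _ hY => stochEmbed_of_oneSumClosure hβ h𝒳 hY) (zero_le_one.trans hβ)

/-- Composition Lemma. If a finite metric space `X` admits a stochastic
`α`-embedding into `⊕₁(𝒳 ∪ 𝒴)`, and every member of `𝒳` admits a stochastic `β`-embedding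
into `𝒵`, then `X` admits a stochastic `α·β`-embedding into `⊕₁(𝒵 ∪ 𝒴)`. -/
theorem statement1 (X : Type) [MetricSpace X] [Fintype X]
    (𝒳 𝒴 𝒵 : Set FinMetric) (α β : ℝ) (hα : 1 ≤ α) (hβ : 1 ≤ β)
    (hX : StochEmbed X dist {Z | OneSumClosure (𝒳 ∪ 𝒴) Z} α)
    (h𝒳 : ∀ Y ∈ 𝒳, StochEmbed Y.carrier Y.dist 𝒵 β) :
    StochEmbed X dist {Z | OneSumClosure (𝒵 ∪ 𝒴) Z} (α * β) :=
  statement1_general X 𝒳 𝒴 𝒵 α β hβ hX h𝒳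
end
end

section
/- For every permutation σ of {1,…,k}, every α ∈ [0,1), every β ∈ [1,2), every level i ∈ {0,…,m}, and every cluster A ∈ C_i with trunk P, the tree T_A contains the stem of A: a path whose vertices are copies of the points {v ∈ P : top(A) ≤ d(r,v) ≤ bottom(A)}, such that the tree distance in T_A between the copies of any two such points v, w equals |d(r,v) − d(r,w)|. -/
open Set

noncomputable section

variable {X : Type} [MetricSpace X] [Fintype X]

/-- `nbr Q δ` is the `δ`-neighborhood `N(Q,δ) = {x : min_{p ∈ Q} d x p ≤ δ}` of `Q`. -/
def nbr (Q : Set X) (δ : ℝ) : Set X := {x | ∃ p ∈ Q, dist x p ≤ δ}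

/-- The horizontal child `A_s = (A ∩ N(P_{σ s}, β·2^{i-2})) \ ⋃_{t<s} A_t` of a cluster `A`
at scale `i` (note `2 ^ i / 4 = 2^{i-2}`, and `⋃_{t<s} A_t = ⋃_{t<s} (A ∩ N(P_{σ t}, β·2^{i-2}))`). -/
def hchild {k : ℕ} (P : Fin k → Set X) (σ : Equiv.Perm (Fin k)) (β : ℝ)
    (A : Set X) (i : ℕ) (s : Fin k) : Set X :=
  (A ∩ nbr (P (σ s)) (β * (2 ^ i / 4))) \
    ⋃ t, ⋃ (_ : t < s), A ∩ nbr (P (σ t)) (β * (2 ^ i / 4))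

/-- The vertical child `A_{s,j}` of a cluster `A` at scale `i`:
the part of the horizontal child `A_s` with `(j-1+α)·2^{i-2} ≤ d r x < (j+α)·2^{i-2}`. -/
def vchild {k : ℕ} (r : X) (P : Fin k → Set X) (σ : Equiv.Perm (Fin k)) (α β : ℝ)
    (A : Set X) (i : ℕ) (s : Fin k) (j : ℕ) : Set X :=
  {x ∈ hchild P σ β A i s |
    ((j : ℝ) - 1 + α) * (2 ^ i / 4) ≤ dist r x ∧ dist r x < ((j : ℝ) + α) * (2 ^ i / 4)}

/-- Clusters of the alternating partitions together with (the indices of) their trunks,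
defined top-down: `partsTAux … n` is the partition `C (m - n)`.  At the top
`C m = {univ}` with trunk `P (σ 0)`; the clusters of `C i` are the nonempty vertical
children `A_{s,j}` (with trunk `P (σ s)`) of clusters `A ∈ C (i+1)`. -/
def partsTAux {k : ℕ} (hk : 0 < k) (r : X) (P : Fin k → Set X) (σ : Equiv.Perm (Fin k))
    (α β : ℝ) (m : ℕ) : ℕ → Set (Set X × Fin k)
  | 0 => {(Set.univ, σ ⟨0, hk⟩)}
  | n + 1 =>
      {Bl | Bl.1.Nonempty ∧
        ∃ A : Set X, (∃ l, (A, l) ∈ partsTAux hk r P σ α β m n) ∧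
          ∃ s : Fin k, ∃ j : ℕ,
            Bl.1 = vchild r P σ α β A (m - (n + 1)) s j ∧ Bl.2 = σ s}

/-- The alternating partition `C i` with trunk indices: `(A, l) ∈ partsT hk r P σ α β m i`
means that `A` is a cluster of `C i` whose trunk is the path `P l`. -/
def partsT {k : ℕ} (hk : 0 < k) (r : X) (P : Fin k → Set X) (σ : Equiv.Perm (Fin k))
    (α β : ℝ) (m i : ℕ) : Set (Set X × Fin k) :=
  partsTAux hk r P σ α β m (m - i)

/-- The alternating partition `C i`. -/
def parts {k : ℕ} (hk : 0 < k) (r : X) (P : Fin k → Set X) (σ : Equiv.Perm (Fin k))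
    (α β : ℝ) (m i : ℕ) : Set (Set X) :=
  {A | ∃ l, (A, l) ∈ partsT hk r P σ α β m i}

/-- `stemDom r P A l` is the vertex set of the stem of a cluster `A` with trunk `P l`:
the points `v ∈ P l` with `top A ≤ d r v ≤ bottom A`, where `top A = min_{a ∈ A} d r a`
and `bottom A = max_{a ∈ A} d r a`. -/
def stemDom (r : X) {k : ℕ} (P : Fin k → Set X) (A : Set X) (l : Fin k) : Set X :=
  {v ∈ P l |
    sInf ((fun a => dist r a) '' A) ≤ dist r v ∧ dist r v ≤ sSup ((fun a => dist r a) '' A)}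

/-- The data produced by the recursive tree construction for the alternating partitions
`C 0, …, C m` (all the trees `T_A` viewed inside the final tree `T`), together with the
properties of the construction:
* `T` is a finite tree metric (`tree`), `f : X → T` is the final injection (`f_inj`);
* `stem i A l` gives the vertices in `T` of the stem of a cluster `A ∈ C i` with trunk
  `P l`: it is an isometric copy (for `|d r · − d r ·|`) of the stem domain (`stem_isom`,
  the invariant (I));
* for a singleton cluster `A ∈ C 0`, the tree `T_A` is the single vertex `f x` (`stem_base`);
* `hstem i As l` gives the vertices of the stem `Q_s` of a (nonempty) horizontal child
  `As` with trunk `P l`, again an isometric copy of its domain (`hstem_isom`); the vertical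
  composition identifies the stem of each nonempty vertical child with its copy inside
  `Q_s` (`vert_glue`), and the stem of a cluster `A ∈ C (i+1)` with trunk `P (σ t)` agrees
  with the stem of its trunk horizontal child (`stem_trunk`);
* `hroot i As l` is the root `r_{As}`: the stem vertex of `As` closest to `r` (`hroot_spec`);
* the horizontal composition joins the root of each nonempty horizontal child `A_s`
  (`s ≠ t`) to the root of the trunk child `A_t` by an edge of length `2 ^ (i+1)`
  (`horiz_edge`, for a cluster of `C (i+1)`). -/
structure TreeCon {k : ℕ} (hk : 0 < k) (r : X) (P : Fin k → Set X)
    (σ : Equiv.Perm (Fin k)) (α β : ℝ) (m : ℕ) where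
  T : FinMetric
  tree : FourPoint T
  f : X → T.carrier
  f_inj : Function.Injective f
  stem : ℕ → Set X → Fin k → X → T.carrier
  hstem : ℕ → Set X → Fin k → X → T.carrier
  hroot : ℕ → Set X → Fin k → T.carrier
  stem_isom : ∀ i ≤ m, ∀ A l, (A, l) ∈ partsT hk r P σ α β m i →
    ∀ v ∈ stemDom r P A l, ∀ w ∈ stemDom r P A l,
      T.dist (stem i A l v) (stem i A l w) = |dist r v - dist r w|
  stem_base : ∀ A l, (A, l) ∈ partsT hk r P σ α β m 0 →
    ∀ x ∈ A, ∀ v ∈ stemDom r P A l, stem 0 A l v = f x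
  hstem_isom : ∀ i, i + 1 ≤ m → ∀ A ∈ parts hk r P σ α β m (i + 1), ∀ s : Fin k,
    (hchild P σ β A i s).Nonempty →
      ∀ v ∈ stemDom r P (hchild P σ β A i s) (σ s),
        ∀ w ∈ stemDom r P (hchild P σ β A i s) (σ s),
          T.dist (hstem i (hchild P σ β A i s) (σ s) v)
              (hstem i (hchild P σ β A i s) (σ s) w) = |dist r v - dist r w|
  vert_glue : ∀ i, i + 1 ≤ m → ∀ A ∈ parts hk r P σ α β m (i + 1), ∀ s : Fin k, ∀ j : ℕ,
    (vchild r P σ α β A i s j).Nonempty →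
      ∀ v ∈ stemDom r P (vchild r P σ α β A i s j) (σ s),
        stem i (vchild r P σ α β A i s j) (σ s) v = hstem i (hchild P σ β A i s) (σ s) v
  stem_trunk : ∀ i, i + 1 ≤ m → ∀ A l, (A, l) ∈ partsT hk r P σ α β m (i + 1) →
    ∀ t : Fin k, σ t = l → (hchild P σ β A i t).Nonempty →
      ∀ v ∈ stemDom r P (hchild P σ β A i t) (σ t),
        stem (i + 1) A l v = hstem i (hchild P σ β A i t) (σ t) v
  hroot_spec : ∀ i, i + 1 ≤ m → ∀ A ∈ parts hk r P σ α β m (i + 1), ∀ s : Fin k,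
    (stemDom r P (hchild P σ β A i s) (σ s)).Nonempty →
      ∃ v ∈ stemDom r P (hchild P σ β A i s) (σ s),
        (∀ w ∈ stemDom r P (hchild P σ β A i s) (σ s), dist r v ≤ dist r w) ∧
          hroot i (hchild P σ β A i s) (σ s) = hstem i (hchild P σ β A i s) (σ s) v
  horiz_edge : ∀ i, i + 1 ≤ m → ∀ A l, (A, l) ∈ partsT hk r P σ α β m (i + 1) →
    ∀ t : Fin k, σ t = l → (hchild P σ β A i t).Nonempty →
      ∀ s : Fin k, s ≠ t → (hchild P σ β A i s).Nonempty →
        T.dist (hroot i (hchild P σ β A i s) (σ s)) (hroot i (hchild P σ β A i t) (σ t)) =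
          2 ^ (i + 1)

/-!
The tree is a rooted tree given by a parent map and a height function strictly decreasing
towards the root, with metric `height u + height w - 2 * height (meet u w)`; it satisfies the
four-point condition because the heights of meets satisfy the ultrametric inequality.

Clusters are encoded by their histories, the lists of choices `(s, j)` leading to them from `X`;
since children are disjoint, a cluster has a single history. A vertex is a point `v` of the stem
carried by a branch: the stem of `X`, or the stem of a horizontal child `A_s` other than the trunk
child of `A`. Along a branch the parent of `v` is the preceding point of the stem and the height
is `d r v` plus an offset, so tree distances along a stem are `|d r v - d r w|`. The first point of
a new branch hangs from the root of the trunk child of `A` at distance `2 ^ (i + 1)`. The stem of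
any cluster is a piece of the branch of its last non-trunk horizontal choice, which makes the
vertical and horizontal gluing hold by construction. At scale `0` a cluster lies within `1/2` of
its stem, which makes the images of points distinct.
-/

theorem min_add_le_add_of_ultrametric {V : Type*} {g : V → V → ℝ}
    (hsymm : ∀ a b, g a b = g b a) (hult : ∀ a b c, min (g a b) (g b c) ≤ g a c)
    (w x y z : V) :
    min (g w y + g x z) (g w z + g x y) ≤ g w x + g y z := by
  have key : ∀ w x, g w y ≤ g x y →
      min (g w y + g x z) (g w z + g x y) ≤ g w x + g y z := by
    intro w x hwx
    have h₁ := hult w y x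
    have h₂ := hult y x z
    have h₃ := hult w z x
    rw [hsymm y x] at h₁ h₂
    rw [hsymm z x] at h₃
    rw [min_le_iff] at h₁ h₂ h₃ ⊢
    rcases h₂ with h₂ | h₂
    · rcases h₃ with h₃ | h₃
      · exact Or.inr (by linarith)
      · rcases h₁ with h₁ | h₁ <;> exact Or.inl (by linarith)
    · rcases h₁ with h₁ | h₁ <;> exact Or.inl (by linarith)
  rcases le_total (g w y) (g x y) with h | h
  · exact key w x h
  · have := key x w h
    rwa [hsymm x w, add_comm (g x z), add_comm (g x y), min_comm] at this

structure HeightedTree (V : Type*) where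
  parent : V → V
  height : V → ℝ
  root : V
  parent_root : parent root = root
  height_parent_lt : ∀ v, v ≠ root → height (parent v) < height v

namespace HeightedTree

variable {V : Type*} (T : HeightedTree V)

def IsAncestor (a u : V) : Prop := ∃ n, T.parent^[n] u = a

variable {T}

theorem isAncestor_refl (u : V) : T.IsAncestor u u := ⟨0, rfl⟩

theorem isAncestor_parent (u : V) : T.IsAncestor (T.parent u) u := ⟨1, rfl⟩

theorem IsAncestor.trans {a b u : V} (hab : T.IsAncestor a b) (hbu : T.IsAncestor b u) :
    T.IsAncestor a u := by
  obtain ⟨n₁, rfl⟩ := hab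
  obtain ⟨n₂, rfl⟩ := hbu
  exact ⟨n₁ + n₂, Function.iterate_add_apply _ n₁ n₂ u⟩

theorem height_parent_le (v : V) : T.height (T.parent v) ≤ T.height v := by
  by_cases hv : v = T.root
  · rw [hv, T.parent_root]
  · exact (T.height_parent_lt v hv).le

theorem IsAncestor.height_le {a u : V} (h : T.IsAncestor a u) : T.height a ≤ T.height u := by
  obtain ⟨n, rfl⟩ := h
  induction n with
  | zero => exact le_rfl
  | succ n ih =>
    rw [Function.iterate_succ_apply']
    exact (height_parent_le _).trans ih

theorem IsAncestor.eq_of_height_le {a u : V} (h : T.IsAncestor a u)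
    (hle : T.height u ≤ T.height a) : a = u := by
  obtain ⟨n, rfl⟩ := h
  rcases n with _ | n
  · rfl
  by_cases hu : u = T.root
  · subst hu
    exact Function.iterate_fixed T.parent_root _
  · have : T.IsAncestor (T.parent^[n + 1] u) (T.parent u) :=
      ⟨n, (Function.iterate_succ_apply T.parent n u).symm⟩
    linarith [this.height_le, T.height_parent_lt u hu]

theorem IsAncestor.total {a b u : V} (ha : T.IsAncestor a u) (hb : T.IsAncestor b u) :
    T.IsAncestor a b ∨ T.IsAncestor b a := by
  obtain ⟨n₁, rfl⟩ := ha
  obtain ⟨n₂, rfl⟩ := hb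
  rcases le_total n₁ n₂ with h | h
  · exact Or.inr ⟨n₂ - n₁, by rw [← Function.iterate_add_apply, Nat.sub_add_cancel h]⟩
  · exact Or.inl ⟨n₁ - n₂, by rw [← Function.iterate_add_apply, Nat.sub_add_cancel h]⟩

variable [Finite V]

theorem isAncestor_root (u : V) : T.IsAncestor T.root u := by
  induction u using (Finite.wellFounded_of_trans_of_irrefl
    (fun a b : V => T.height a < T.height b)).induction with
  | _ u ih =>
    by_cases hu : u = T.root
    · rw [hu]; exact isAncestor_refl _
    · exact (ih _ (T.height_parent_lt u hu)).trans (isAncestor_parent u)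

variable (T)

def meet (u w : V) : V :=
  (Set.exists_max_image {a | T.IsAncestor a u ∧ T.IsAncestor a w} T.height (Set.toFinite _)
    ⟨T.root, isAncestor_root u, isAncestor_root w⟩).choose

theorem meet_spec (u w : V) :
    (T.IsAncestor (T.meet u w) u ∧ T.IsAncestor (T.meet u w) w) ∧
      ∀ a, T.IsAncestor a u → T.IsAncestor a w → T.height a ≤ T.height (T.meet u w) :=
  let h := Set.exists_max_image {a | T.IsAncestor a u ∧ T.IsAncestor a w} T.height
    (Set.toFinite _) ⟨T.root, isAncestor_root u, isAncestor_root w⟩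
  ⟨h.choose_spec.1, fun a hau haw => h.choose_spec.2 a ⟨hau, haw⟩⟩

/-- The path metric of the tree, an edge `v — parent v` having length
`height v - height (parent v)`. -/
def dist (u w : V) : ℝ := T.height u + T.height w - 2 * T.height (T.meet u w)

theorem height_meet_comm (u w : V) : T.height (T.meet u w) = T.height (T.meet w u) :=
  le_antisymm ((T.meet_spec w u).2 _ (T.meet_spec u w).1.2 (T.meet_spec u w).1.1)
    ((T.meet_spec u w).2 _ (T.meet_spec w u).1.2 (T.meet_spec w u).1.1)

theorem height_meet_le_left (u w : V) : T.height (T.meet u w) ≤ T.height u :=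
  (T.meet_spec u w).1.1.height_le

theorem height_meet_le_right (u w : V) : T.height (T.meet u w) ≤ T.height w :=
  (T.meet_spec u w).1.2.height_le

theorem min_height_meet_le (u z w : V) :
    min (T.height (T.meet u z)) (T.height (T.meet z w)) ≤ T.height (T.meet u w) := by
  obtain ⟨⟨huz, hzu⟩, -⟩ := T.meet_spec u z
  obtain ⟨⟨hzw, hwz⟩, -⟩ := T.meet_spec z w
  rcases hzu.total hzw with h | h
  · exact (min_le_left _ _).trans ((T.meet_spec u w).2 _ huz (h.trans hwz))
  · exact (min_le_right _ _).trans ((T.meet_spec u w).2 _ (h.trans huz) hwz)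

theorem dist_comm (u w : V) : T.dist u w = T.dist w u := by
  rw [dist, dist, T.height_meet_comm]; ring

theorem dist_triangle (u z w : V) : T.dist u w ≤ T.dist u z + T.dist z w := by
  have hmin := T.min_height_meet_le u z w
  have hmax : max (T.height (T.meet u z)) (T.height (T.meet z w)) ≤ T.height z :=
    max_le (T.height_meet_le_right u z) (T.height_meet_le_left z w)
  have := min_add_max (T.height (T.meet u z)) (T.height (T.meet z w))
  simp only [dist]
  linarith

variable {T}

theorem height_meet_of_isAncestor {a u : V} (h : T.IsAncestor a u) :
    T.height (T.meet u a) = T.height a :=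
  le_antisymm (T.height_meet_le_right u a) ((T.meet_spec u a).2 a h (isAncestor_refl a))

theorem dist_of_isAncestor {a u : V} (h : T.IsAncestor a u) :
    T.dist u a = T.height u - T.height a := by
  rw [dist, height_meet_of_isAncestor h]; ring

theorem eq_of_dist_eq_zero {u w : V} (h : T.dist u w = 0) : u = w := by
  have hu := T.height_meet_le_left u w
  have hw := T.height_meet_le_right u w
  rw [dist] at h
  rw [← (T.meet_spec u w).1.1.eq_of_height_le (by linarith),
    (T.meet_spec u w).1.2.eq_of_height_le (by linarith)]

variable (T)

@[reducible] def toMetricSpace : MetricSpace V where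
  dist := T.dist
  dist_self u := by rw [dist_of_isAncestor (isAncestor_refl u), sub_self]
  dist_comm := T.dist_comm
  dist_triangle := T.dist_triangle
  eq_of_dist_eq_zero := eq_of_dist_eq_zero

theorem dist_four_point (w x y z : V) :
    T.dist w x + T.dist y z ≤ max (T.dist w y + T.dist x z) (T.dist w z + T.dist x y) := by
  have := min_add_le_add_of_ultrametric (g := fun u v => T.height (T.meet u v))
    T.height_meet_comm T.min_height_meet_le w x y z
  simp only [dist]
  rcases min_le_iff.1 this with h | h
  · exact le_max_of_le_left (by linarith)
  · exact le_max_of_le_right (by linarith)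

end HeightedTree

section Partitions

omit [Fintype X]

variable {k : ℕ} (r : X) (P : Fin k → Set X) (σ : Equiv.Perm (Fin k)) (α β : ℝ) (A : Set X)
  (i : ℕ)

theorem hchild_subset (s : Fin k) : hchild P σ β A i s ⊆ A := fun _ hx => hx.1.1

theorem hchild_subset_nbr (s : Fin k) :
    hchild P σ β A i s ⊆ nbr (P (σ s)) (β * (2 ^ i / 4)) :=
  fun _ hx => hx.1.2

theorem vchild_subset_hchild (s : Fin k) (j : ℕ) :
    vchild r P σ α β A i s j ⊆ hchild P σ β A i s := fun _ hx => hx.1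

theorem disjoint_hchild {s s' : Fin k} (hss : s ≠ s') :
    Disjoint (hchild P σ β A i s) (hchild P σ β A i s') := by
  refine Set.disjoint_left.2 fun x hx hx' => ?_
  rcases lt_or_gt_of_ne hss with hlt | hlt
  · exact hx'.2 (Set.mem_biUnion hlt hx.1)
  · exact hx.2 (Set.mem_biUnion hlt hx'.1)

theorem disjoint_vchild (s : Fin k) {j j' : ℕ} (hjj : j ≠ j') :
    Disjoint (vchild r P σ α β A i s j) (vchild r P σ α β A i s j') := by
  refine Set.disjoint_left.2 fun x ⟨_, hx₁, hx₂⟩ ⟨_, hx₁', hx₂'⟩ => ?_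
  have hw : (0 : ℝ) < 2 ^ i / 4 := by positivity
  rcases lt_or_gt_of_ne hjj with hlt | hlt
  · have : (j : ℝ) + 1 ≤ j' := by exact_mod_cast hlt
    nlinarith
  · have : (j' : ℝ) + 1 ≤ j := by exact_mod_cast hlt
    nlinarith

end Partitions

section Paths

omit [Fintype X]

variable {k : ℕ} {r : X} {P : Fin k → Set X}

theorem stemDom_subset_path (A : Set X) (l : Fin k) : stemDom r P A l ⊆ P l := fun _ hv => hv.1

theorem eq_of_mem_path_of_abs_dist_sub_lt_one
    (hpath : ∀ s, ∀ x ∈ P s, ∀ y ∈ P s, dist x y = |dist r x - dist r y|)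
    (hmin : ∀ x y : X, x ≠ y → 1 ≤ dist x y) {l : Fin k} {v w : X} (hv : v ∈ P l)
    (hw : w ∈ P l) (h : |dist r v - dist r w| < 1) : v = w := by
  by_contra hne
  linarith [hmin v w hne, hpath l v hv w hw]

theorem eq_of_mem_path_of_dist_eq
    (hpath : ∀ s, ∀ x ∈ P s, ∀ y ∈ P s, dist x y = |dist r x - dist r y|) {l : Fin k}
    {v w : X} (hv : v ∈ P l) (hw : w ∈ P l) (h : dist r v = dist r w) : v = w := by
  rw [← dist_eq_zero, hpath l v hv w hw, h, sub_self, abs_zero]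

end Paths

section Stems

variable {k : ℕ} (r : X) (P : Fin k → Set X)

theorem stemDom_mono {A B : Set X} (hA : A.Nonempty) (hAB : A ⊆ B) (l : Fin k) :
    stemDom r P A l ⊆ stemDom r P B l := fun _ ⟨hv, hinf, hsup⟩ =>
  ⟨hv, (csInf_le_csInf (Set.toFinite _).bddBelow (hA.image _) (Set.image_mono hAB)).trans hinf,
    hsup.trans (csSup_le_csSup (Set.toFinite _).bddAbove (hA.image _) (Set.image_mono hAB))⟩

theorem mem_stemDom_univ {l : Fin k} (hr : r ∈ P l) : r ∈ stemDom r P Set.univ l :=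
  ⟨hr, csInf_le (Set.toFinite _).bddBelow ⟨r, trivial, rfl⟩,
    le_csSup (Set.toFinite _).bddAbove ⟨r, trivial, rfl⟩⟩

theorem abs_dist_sub_lt_of_mem_stemDom {A : Set X} {l : Fin k} {a b : ℝ}
    (hA : ∀ y ∈ A, a ≤ dist r y ∧ dist r y < b) {x v : X} (hx : x ∈ A)
    (hv : v ∈ stemDom r P A l) : |dist r x - dist r v| < b - a := by
  obtain ⟨-, hinf, hsup⟩ := hv
  obtain ⟨y, hy, hymax⟩ := Set.exists_max_image A (dist r) (Set.toFinite _) ⟨x, hx⟩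
  have hlow : a ≤ sInf ((fun y => dist r y) '' A) :=
    le_csInf ⟨_, x, hx, rfl⟩ (by rintro _ ⟨z, hz, rfl⟩; exact (hA z hz).1)
  have hup : sSup ((fun y => dist r y) '' A) ≤ dist r y :=
    csSup_le ⟨_, x, hx, rfl⟩ (by rintro _ ⟨z, hz, rfl⟩; exact hymax z hz)
  have := hA x hx
  have := hA y hy
  rw [abs_lt]
  constructor <;> linarith

end Stems

structure Params (X : Type) where
  k : ℕ
  hk : 0 < k
  r : X
  P : Fin k → Set X
  σ : Equiv.Perm (Fin k)
  α : ℝ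
  β : ℝ
  m : ℕ

namespace Params

open Classical

variable (c : Params X)

/-- The choices `(s, j)` of a horizontal and a vertical child made on the way down from `X`,
the most recent one first. -/
abbrev Hist : Type := List (Fin c.k × ℕ)

def cluster : c.Hist → Set X
  | [] => Set.univ
  | (s, j) :: h => vchild c.r c.P c.σ c.α c.β (cluster h) (c.m - (h.length + 1)) s j

/-- The trunk of `c.cluster h` is `c.P (c.σ (c.trunk h))`. -/
def trunk : c.Hist → Fin c.k
  | [] => ⟨0, c.hk⟩
  | (s, _) :: _ => s

def Valid (h : c.Hist) : Prop := h.length ≤ c.m ∧ (c.cluster h).Nonempty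

def clusterStem (h : c.Hist) : Set X := stemDom c.r c.P (c.cluster h) (c.σ (c.trunk h))

def child (h : c.Hist) (s : Fin c.k) : Set X :=
  hchild c.P c.σ c.β (c.cluster h) (c.m - (h.length + 1)) s

def childStem (h : c.Hist) (s : Fin c.k) : Set X := stemDom c.r c.P (c.child h s) (c.σ s)

/-- The history of a cluster `A` of `C i` (when there is one). -/
def histAt (i : ℕ) (A : Set X) : c.Hist :=
  if hA : ∃ h : c.Hist, (c.cluster h).Nonempty ∧ h.length + i = c.m ∧ c.cluster h = A
  then hA.choose else []

/-- The history of the parent of a horizontal child `Q` at scale `i` with trunk `c.P l`. -/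
def parentHist (i : ℕ) (Q : Set X) (l : Fin c.k) : c.Hist :=
  if hQ : ∃ h : c.Hist, (c.cluster h).Nonempty ∧ h.length + (i + 1) = c.m ∧
      c.child h (c.σ.symm l) = Q
  then hQ.choose else []

def closest (D : Set X) : X :=
  if hD : D.Nonempty then (Set.exists_min_image D (dist c.r) D.toFinite hD).choose else c.r

def pred (D : Set X) (v : X) : X :=
  if hD : {u ∈ D | dist c.r u < dist c.r v}.Nonempty then
    (Set.exists_max_image _ (dist c.r) (Set.toFinite _) hD).choose
  else c.r

def level (i : ℕ) : Fin (c.m + 1) := ⟨min i c.m, by omega⟩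

/-- `none` carries the stem of `X` and `some (i, A, s)` the stem of the horizontal child `A_s`
of `A` at scale `i`, for `s` not the trunk of `A`; the stem of any other cluster lies on the
branch of the last non-trunk horizontal child in its history (`histBranch`). Scales are kept in
`Fin (c.m + 1)` so that the vertices form a finite type. -/
abbrev Branch : Type := Option (Fin (c.m + 1) × Set X × Fin c.k)

def branchDom : c.Branch → Set X
  | none => stemDom c.r c.P Set.univ (c.σ ⟨0, c.hk⟩)
  | some (i, A, s) => stemDom c.r c.P (hchild c.P c.σ c.β A i s) (c.σ s)

def IsBranch : c.Branch → Prop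
  | none => True
  | some (i, A, s) => A.Nonempty ∧
      ∃ h : c.Hist, h.length + (i.val + 1) = c.m ∧ c.cluster h = A ∧ s ≠ c.trunk h

/-- The branch containing the stem of `c.cluster h`. -/
def histBranch : c.Hist → c.Branch
  | [] => none
  | (s, _) :: h =>
      if s = c.trunk h then histBranch h else some (c.level (c.m - (h.length + 1)), c.cluster h, s)

def TrunkRooted (h : c.Hist) : Prop :=
  (c.child h (c.trunk h)).Nonempty ∧ (c.childStem h (c.trunk h)).Nonempty

/-- The height of the vertex `(c.histBranch h, v)` is `c.offset h + dist c.r v`. A new branch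
starts at height `2 ^ (i + 1)` above the root of the trunk child (see `attachHeight`). -/
def offset : c.Hist → ℝ
  | [] => 0
  | (s, _) :: h =>
      if s = c.trunk h then offset h
      else (if c.TrunkRooted h then offset h + dist c.r (c.closest (c.childStem h (c.trunk h)))
          else 1) + 2 ^ (c.m - h.length) - dist c.r (c.closest (c.childStem h s))

/-- The height of the root of the trunk child of `c.cluster h`. -/
def attachHeight (h : c.Hist) : ℝ :=
  if c.TrunkRooted h then c.offset h + dist c.r (c.closest (c.childStem h (c.trunk h))) else 1

def branchOffset : c.Branch → ℝ
  | none => 0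
  | some (i, A, s) => c.offset ((s, 0) :: c.histAt (i.val + 1) A)

/-- Vertices of the tree: points `v` of a branch `b`, one leaf for every point of `X` (the image
of a point whose cluster in `C 0` has an empty stem), and anchors `(i, A, s)` serving as the
root of a horizontal child with empty stem. -/
abbrev Vertex : Type := (c.Branch × X) ⊕ (X ⊕ (Fin (c.m + 1) × Set X × Fin c.k))

def root : c.Vertex := .inl (none, c.r)

def trunkRoot (h : c.Hist) : c.Vertex :=
  if c.TrunkRooted h then .inl (c.histBranch h, c.closest (c.childStem h (c.trunk h)))
  else .inr (.inr (c.level (c.m - (h.length + 1)), c.cluster h, c.trunk h))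

/-- The vertex a branch hangs from. -/
def branchBase : c.Branch → c.Vertex
  | none => c.root
  | some (i, A, _) => c.trunkRoot (c.histAt (i.val + 1) A)

/-- Vertices that take no part in the construction are children of the root, at height `1`. -/
def parent : c.Vertex → c.Vertex
  | .inl (b, v) =>
      if c.IsBranch b ∧ v ∈ c.branchDom b then
        if v = c.closest (c.branchDom b) then c.branchBase b
        else .inl (b, c.pred (c.branchDom b) v)
      else c.root
  | .inr (.inl _) => c.root
  | .inr (.inr (i, A, s)) => if c.IsBranch (some (i, A, s)) then c.branchBase (some (i, A, s))
      else c.root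

def height : c.Vertex → ℝ
  | .inl (b, v) => if c.IsBranch b ∧ v ∈ c.branchDom b then c.branchOffset b + dist c.r v else 1
  | .inr (.inl _) => 1
  | .inr (.inr (i, A, s)) => if c.IsBranch (some (i, A, s))
      then c.attachHeight (c.histAt (i.val + 1) A) + 2 ^ (i.val + 1) else 1

def stem (i : ℕ) (A : Set X) (_ : Fin c.k) (v : X) : c.Vertex :=
  .inl (c.histBranch (c.histAt i A), v)

def hstem (i : ℕ) (Q : Set X) (l : Fin c.k) (v : X) : c.Vertex :=
  .inl (c.histBranch ((c.σ.symm l, 0) :: c.parentHist i Q l), v)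

def hroot (i : ℕ) (Q : Set X) (l : Fin c.k) : c.Vertex :=
  if (stemDom c.r c.P Q l).Nonempty then c.hstem i Q l (c.closest (stemDom c.r c.P Q l))
  else .inr (.inr (c.level i, c.cluster (c.parentHist i Q l), c.σ.symm l))

def pointVertex (x : X) : c.Vertex :=
  if hx : ∃ h : c.Hist, h.length = c.m ∧ x ∈ c.cluster h ∧ (c.clusterStem h).Nonempty
  then .inl (c.histBranch hx.choose, c.closest (c.clusterStem hx.choose))
  else .inr (.inl x)

variable {c}

section

omit [Fintype X]

theorem cluster_cons_subset (h : c.Hist) (s : Fin c.k) (j : ℕ) :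
    c.cluster ((s, j) :: h) ⊆ c.cluster h :=
  (vchild_subset_hchild _ _ _ _ _ _ _ _ _).trans (hchild_subset _ _ _ _ _ _)

theorem child_subset (h : c.Hist) (s : Fin c.k) : c.child h s ⊆ c.cluster h :=
  hchild_subset _ _ _ _ _ _

theorem cluster_cons_subset_child (h : c.Hist) (s : Fin c.k) (j : ℕ) :
    c.cluster ((s, j) :: h) ⊆ c.child h s :=
  vchild_subset_hchild _ _ _ _ _ _ _ _ _

theorem child_eq {h : c.Hist} {i : ℕ} (hlen : h.length + (i + 1) = c.m) (s : Fin c.k) :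
    c.child h s = hchild c.P c.σ c.β (c.cluster h) i s := by
  rw [child, show c.m - (h.length + 1) = i by omega]

theorem cluster_cons_eq {h : c.Hist} {i : ℕ} (hlen : h.length + (i + 1) = c.m) (s : Fin c.k)
    (j : ℕ) : c.cluster ((s, j) :: h) = vchild c.r c.P c.σ c.α c.β (c.cluster h) i s j := by
  rw [cluster, show c.m - (h.length + 1) = i by omega]

theorem Valid.tail {p : Fin c.k × ℕ} {h : c.Hist} (hv : c.Valid (p :: h)) : c.Valid h :=
  ⟨Nat.le_of_succ_le hv.1, hv.2.mono (cluster_cons_subset h p.1 p.2)⟩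

theorem eq_of_cluster_inter_nonempty :
    ∀ {h h' : c.Hist}, h.length = h'.length → (c.cluster h ∩ c.cluster h').Nonempty → h = h'
  | [], [], _, _ => rfl
  | (s, j) :: h, (s', j') :: h', hlen, ⟨x, hx, hx'⟩ => by
    obtain rfl : h = h' := eq_of_cluster_inter_nonempty (by simpa using hlen)
      ⟨x, cluster_cons_subset h s j hx, cluster_cons_subset h' s' j' hx'⟩
    obtain rfl : s = s' := by
      by_contra hss
      exact (disjoint_hchild _ _ _ _ _ hss).le_bot ⟨hx.1, hx'.1⟩
    obtain rfl : j = j' := by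
      by_contra hjj
      exact (disjoint_vchild _ _ _ _ _ _ _ _ hjj).le_bot ⟨hx, hx'⟩
    rfl

theorem exists_hist_of_mem_partsTAux {n : ℕ} {A : Set X} {l : Fin c.k}
    (hA : (A, l) ∈ partsTAux c.hk c.r c.P c.σ c.α c.β c.m n) :
    ∃ h : c.Hist, h.length = n ∧ c.cluster h = A ∧ c.σ (c.trunk h) = l ∧ A.Nonempty := by
  induction n generalizing A l with
  | zero =>
    obtain ⟨rfl, rfl⟩ := Prod.ext_iff.1 hA
    exact ⟨[], rfl, rfl, rfl, c.r, trivial⟩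
  | succ n ih =>
    obtain ⟨hne, A₀, ⟨l₀, hA₀⟩, s, j, rfl, rfl⟩ := hA
    obtain ⟨h₀, rfl, rfl, -, -⟩ := ih hA₀
    exact ⟨(s, j) :: h₀, rfl, rfl, rfl, hne⟩

theorem histAt_cluster {h : c.Hist} {i : ℕ} (hne : (c.cluster h).Nonempty)
    (hlen : h.length + i = c.m) : c.histAt i (c.cluster h) = h := by
  have hex : ∃ h' : c.Hist, (c.cluster h').Nonempty ∧ h'.length + i = c.m ∧
      c.cluster h' = c.cluster h := ⟨h, hne, hlen, rfl⟩
  rw [histAt, dif_pos hex]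
  obtain ⟨-, hlen', hcl⟩ := hex.choose_spec
  exact eq_of_cluster_inter_nonempty (by omega) (by rw [hcl, Set.inter_self]; exact hne)

theorem parentHist_child {h : c.Hist} {i : ℕ} {s : Fin c.k} (hne : (c.child h s).Nonempty)
    (hlen : h.length + (i + 1) = c.m) : c.parentHist i (c.child h s) (c.σ s) = h := by
  have hex : ∃ h' : c.Hist, (c.cluster h').Nonempty ∧ h'.length + (i + 1) = c.m ∧
      c.child h' (c.σ.symm (c.σ s)) = c.child h s :=
    ⟨h, hne.mono (child_subset h s), hlen, by rw [Equiv.symm_apply_apply]⟩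
  rw [parentHist, dif_pos hex]
  obtain ⟨-, hlen', hch⟩ := hex.choose_spec
  obtain ⟨x, hx⟩ := hne
  exact eq_of_cluster_inter_nonempty (by omega)
    ⟨x, child_subset _ _ (hch ▸ hx), child_subset h s hx⟩

theorem exists_hist_of_mem_partsT {i : ℕ} (hi : i ≤ c.m) {A : Set X} {l : Fin c.k}
    (hA : (A, l) ∈ partsT c.hk c.r c.P c.σ c.α c.β c.m i) :
    ∃ h : c.Hist, c.Valid h ∧ h.length + i = c.m ∧ c.cluster h = A ∧
      c.σ (c.trunk h) = l := by
  obtain ⟨h, hlen, rfl, htr, hne⟩ := exists_hist_of_mem_partsTAux hA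
  exact ⟨h, ⟨by omega, hne⟩, by omega, rfl, htr⟩

end

section Closest

variable (c) {D : Set X}

theorem closest_mem (hD : D.Nonempty) : c.closest D ∈ D := by
  rw [closest, dif_pos hD]
  exact (Set.exists_min_image D (dist c.r) D.toFinite hD).choose_spec.1

theorem dist_closest_le {v : X} (hv : v ∈ D) : dist c.r (c.closest D) ≤ dist c.r v := by
  rw [closest, dif_pos ⟨v, hv⟩]
  exact (Set.exists_min_image D (dist c.r) D.toFinite ⟨v, hv⟩).choose_spec.2 v hv

theorem pred_mem {v : X} (hD : {u ∈ D | dist c.r u < dist c.r v}.Nonempty) :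
    c.pred D v ∈ D ∧ dist c.r (c.pred D v) < dist c.r v := by
  rw [pred, dif_pos hD]
  exact (Set.exists_max_image _ (dist c.r) (Set.toFinite _) hD).choose_spec.1

theorem dist_le_dist_pred {u v : X} (hu : u ∈ D) (huv : dist c.r u < dist c.r v) :
    dist c.r u ≤ dist c.r (c.pred D v) := by
  have hD : {w ∈ D | dist c.r w < dist c.r v}.Nonempty := ⟨u, hu, huv⟩
  rw [pred, dif_pos hD]
  exact (Set.exists_max_image _ (dist c.r) (Set.toFinite _) hD).choose_spec.2 u ⟨hu, huv⟩

end Closest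

section

omit [Fintype X]

omit [MetricSpace X] in
theorem level_val {i : ℕ} (hi : i ≤ c.m) : (c.level i).val = i := min_eq_left hi

theorem childStem_eq_branchDom (h : c.Hist) (s : Fin c.k) :
    c.childStem h s = c.branchDom (some (c.level (c.m - (h.length + 1)), c.cluster h, s)) := by
  rw [branchDom, level_val (Nat.sub_le _ _)]
  rfl

theorem exists_branchDom_subset_path (b : c.Branch) : ∃ l, c.branchDom b ⊆ c.P l := by
  rcases b with _ | ⟨i, A, s⟩
  · exact ⟨_, stemDom_subset_path _ _⟩
  · exact ⟨_, stemDom_subset_path _ _⟩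

theorem isBranch_histBranch_cons :
    ∀ {h : c.Hist}, c.Valid h → h.length + 1 ≤ c.m → ∀ s j,
      c.IsBranch (c.histBranch ((s, j) :: h))
  | h, hv, hlen, s, j => by
    by_cases hs : s = c.trunk h
    · rw [histBranch, if_pos hs]
      match h, hv, hlen with
      | [], _, _ => trivial
      | (s', j') :: h', hv, hlen =>
        exact isBranch_histBranch_cons hv.tail (Nat.le_of_succ_le hlen) s' j'
    · rw [histBranch, if_neg hs]
      exact ⟨hv.2, h, by rw [level_val (Nat.sub_le _ _)]; omega, rfl, hs⟩

theorem isBranch_histBranch {h : c.Hist} (hv : c.Valid h) : c.IsBranch (c.histBranch h) := by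
  rcases h with _ | ⟨⟨s, j⟩, h⟩
  · trivial
  · exact isBranch_histBranch_cons hv.tail (by simpa using hv.1) s j

end

theorem offset_cons_of_ne_trunk {h : c.Hist} {s : Fin c.k} (hs : s ≠ c.trunk h) (j : ℕ) :
    c.offset ((s, j) :: h) =
      c.attachHeight h + 2 ^ (c.m - h.length) - dist c.r (c.closest (c.childStem h s)) := by
  rw [offset, if_neg hs]
  rfl

theorem clusterStem_subset_branchDom :
    ∀ {h : c.Hist}, (c.cluster h).Nonempty → c.clusterStem h ⊆ c.branchDom (c.histBranch h)
  | [], _ => subset_rfl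
  | (s, j) :: h, hne => by
    by_cases hs : s = c.trunk h
    · subst hs
      rw [histBranch, if_pos rfl]
      refine subset_trans ?_ (clusterStem_subset_branchDom (hne.mono (cluster_cons_subset h _ j)))
      exact stemDom_mono _ _ hne (cluster_cons_subset h _ j) _
    · rw [histBranch, if_neg hs, ← childStem_eq_branchDom]
      exact stemDom_mono _ _ hne (vchild_subset_hchild _ _ _ _ _ _ _ _ _) _

theorem offset_eq_branchOffset :
    ∀ {h : c.Hist}, c.Valid h → c.offset h = c.branchOffset (c.histBranch h)
  | [], _ => rfl
  | (s, j) :: h, hv => by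
    by_cases hs : s = c.trunk h
    · rw [offset, histBranch, if_pos hs, if_pos hs]
      exact offset_eq_branchOffset hv.tail
    · have hlen : h.length + 1 ≤ c.m := by simpa using hv.1
      rw [histBranch, if_neg hs, branchOffset, level_val (Nat.sub_le _ _),
        histAt_cluster hv.tail.2 (by omega), offset_cons_of_ne_trunk hs,
        offset_cons_of_ne_trunk hs]

theorem branchOffset_add_dist_closest {i : Fin (c.m + 1)} {A : Set X} {s : Fin c.k}
    (hb : c.IsBranch (some (i, A, s))) :
    c.branchOffset (some (i, A, s)) + dist c.r (c.closest (c.branchDom (some (i, A, s)))) =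
      c.attachHeight (c.histAt (i.val + 1) A) + 2 ^ (i.val + 1) := by
  obtain ⟨hA, h, hlen, rfl, hs⟩ := hb
  have hi : c.m - (h.length + 1) = i.val := by omega
  rw [branchOffset, histAt_cluster hA hlen]
  rw [offset_cons_of_ne_trunk hs]
  rw [show c.m - h.length = i.val + 1 by omega, childStem, child, hi]
  simp only [branchDom]
  ring

theorem closest_branchDom_none (hr : ∀ s, c.r ∈ c.P s) :
    c.closest (c.branchDom none) = c.r := by
  have hle := c.dist_closest_le (mem_stemDom_univ c.r c.P (hr (c.σ ⟨0, c.hk⟩)))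
  rw [dist_self] at hle
  exact (dist_le_zero.1 hle).symm

theorem dist_closest_lt
    (hpath : ∀ s, ∀ x ∈ c.P s, ∀ y ∈ c.P s, dist x y = |dist c.r x - dist c.r y|)
    {b : c.Branch} {v : X} (hv : v ∈ c.branchDom b) (hne : v ≠ c.closest (c.branchDom b)) :
    dist c.r (c.closest (c.branchDom b)) < dist c.r v := by
  obtain ⟨l, hl⟩ := exists_branchDom_subset_path b
  refine (c.dist_closest_le hv).lt_of_ne fun heq => hne ?_
  exact eq_of_mem_path_of_dist_eq hpath (hl hv) (hl (c.closest_mem ⟨v, hv⟩)) heq.symm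

theorem height_inl {b : c.Branch} {v : X} (hb : c.IsBranch b) (hv : v ∈ c.branchDom b) :
    c.height (.inl (b, v)) = c.branchOffset b + dist c.r v := by
  rw [height, if_pos ⟨hb, hv⟩]

theorem parent_inl_closest {b : c.Branch} (hb : c.IsBranch b)
    (hv : c.closest (c.branchDom b) ∈ c.branchDom b) :
    c.parent (.inl (b, c.closest (c.branchDom b))) = c.branchBase b := by
  rw [parent, if_pos ⟨hb, hv⟩, if_pos rfl]

theorem parent_inl_of_ne_closest {b : c.Branch} {v : X} (hb : c.IsBranch b)
    (hv : v ∈ c.branchDom b) (hne : v ≠ c.closest (c.branchDom b)) :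
    c.parent (.inl (b, v)) = .inl (b, c.pred (c.branchDom b) v) := by
  rw [parent, if_pos ⟨hb, hv⟩, if_neg hne]

theorem height_trunkRoot {h : c.Hist} (hv : c.Valid h) (hlen : h.length + 1 ≤ c.m) :
    c.height (c.trunkRoot h) = c.attachHeight h := by
  rw [trunkRoot, attachHeight]
  by_cases ht : c.TrunkRooted h
  · have hmem : c.closest (c.childStem h (c.trunk h)) ∈ c.branchDom (c.histBranch h) :=
      clusterStem_subset_branchDom hv.2
        (stemDom_mono _ _ ht.1 (child_subset _ _) _ (c.closest_mem ht.2))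
    rw [if_pos ht, if_pos ht, height_inl (isBranch_histBranch hv) hmem, offset_eq_branchOffset hv]
  · rw [if_neg ht, if_neg ht, height, if_neg]
    rintro ⟨-, h', hlen', hcl, hs⟩
    rw [level_val (Nat.sub_le _ _)] at hlen'
    obtain rfl : h' = h :=
      eq_of_cluster_inter_nonempty (by omega) (by rw [hcl, Set.inter_self]; exact hv.2)
    exact hs rfl

theorem height_branchBase_some {i : Fin (c.m + 1)} {A : Set X} {s : Fin c.k}
    (hb : c.IsBranch (some (i, A, s))) :
    c.height (c.branchBase (some (i, A, s))) = c.attachHeight (c.histAt (i.val + 1) A) := by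
  obtain ⟨hA, h, hlen, rfl, -⟩ := hb
  rw [branchBase, histAt_cluster hA hlen]
  exact height_trunkRoot ⟨by omega, hA⟩ (by omega)

theorem parent_root (hr : ∀ s, c.r ∈ c.P s) : c.parent c.root = c.root := by
  have hmem : c.r ∈ c.branchDom none := mem_stemDom_univ c.r c.P (hr _)
  rw [root, parent, if_pos ⟨trivial, hmem⟩, if_pos (closest_branchDom_none hr).symm]
  rfl

theorem height_root (hr : ∀ s, c.r ∈ c.P s) : c.height c.root = 0 := by
  rw [root, height_inl (b := none) trivial (mem_stemDom_univ c.r c.P (hr _)), branchOffset,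
    dist_self, add_zero]

theorem height_parent_lt (hr : ∀ s, c.r ∈ c.P s)
    (hpath : ∀ s, ∀ x ∈ c.P s, ∀ y ∈ c.P s, dist x y = |dist c.r x - dist c.r y|)
    (u : c.Vertex) (hu : u ≠ c.root) : c.height (c.parent u) < c.height u := by
  have h₀ := height_root hr
  rcases u with ⟨b, v⟩ | x | ⟨i, A, s⟩
  · by_cases hbv : c.IsBranch b ∧ v ∈ c.branchDom b
    · obtain ⟨hb, hv⟩ := hbv
      by_cases hcl : v = c.closest (c.branchDom b)
      · subst hcl
        rw [parent_inl_closest hb hv, height_inl hb hv]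
        rcases b with _ | ⟨i, A, s⟩
        · exact absurd (by rw [closest_branchDom_none hr]; rfl) hu
        · rw [height_branchBase_some hb, branchOffset_add_dist_closest hb]
          linarith [pow_pos (two_pos : (0 : ℝ) < 2) (i.val + 1)]
      · have hD : {w ∈ c.branchDom b | dist c.r w < dist c.r v}.Nonempty :=
          ⟨_, c.closest_mem ⟨v, hv⟩, dist_closest_lt hpath hv hcl⟩
        obtain ⟨hpmem, hplt⟩ := c.pred_mem hD
        rw [parent_inl_of_ne_closest hb hv hcl, height_inl hb hpmem, height_inl hb hv]
        linarith
    · rw [parent, if_neg hbv, h₀, height, if_neg hbv]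
      exact one_pos
  · rw [parent, h₀, height]
    exact one_pos
  · by_cases hb : c.IsBranch (some (i, A, s))
    · rw [parent, if_pos hb, height_branchBase_some hb, height, if_pos hb]
      linarith [pow_pos (two_pos : (0 : ℝ) < 2) (i.val + 1)]
    · rw [parent, if_neg hb, h₀, height, if_neg hb]
      exact one_pos

variable (c) in
def tree (hr : ∀ s, c.r ∈ c.P s)
    (hpath : ∀ s, ∀ x ∈ c.P s, ∀ y ∈ c.P s, dist x y = |dist c.r x - dist c.r y|) :
    HeightedTree c.Vertex :=
  ⟨c.parent, c.height, c.root, parent_root hr, height_parent_lt hr hpath⟩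

section

omit [Fintype X]

theorem stem_cluster {h : c.Hist} {i : ℕ} (hne : (c.cluster h).Nonempty)
    (hlen : h.length + i = c.m) (l : Fin c.k) (v : X) :
    c.stem i (c.cluster h) l v = .inl (c.histBranch h, v) := by
  rw [stem, histAt_cluster hne hlen]

theorem hstem_child {h : c.Hist} {i : ℕ} {s : Fin c.k} (hne : (c.child h s).Nonempty)
    (hlen : h.length + (i + 1) = c.m) (v : X) :
    c.hstem i (c.child h s) (c.σ s) v = .inl (c.histBranch ((s, 0) :: h), v) := by
  rw [hstem, parentHist_child hne hlen, Equiv.symm_apply_apply]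

theorem stem_vchild_eq_hstem {i : ℕ} (hi : i + 1 ≤ c.m) {A : Set X}
    (hA : A ∈ parts c.hk c.r c.P c.σ c.α c.β c.m (i + 1)) {s : Fin c.k} {j : ℕ}
    (hne : (vchild c.r c.P c.σ c.α c.β A i s j).Nonempty) (v : X) :
    c.stem i (vchild c.r c.P c.σ c.α c.β A i s j) (c.σ s) v =
      c.hstem i (hchild c.P c.σ c.β A i s) (c.σ s) v := by
  obtain ⟨l, hA⟩ := hA
  obtain ⟨h, -, hlen, rfl, -⟩ := exists_hist_of_mem_partsT hi hA
  rw [← cluster_cons_eq hlen] at hne ⊢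
  rw [← child_eq hlen, stem_cluster hne (by simp only [List.length_cons]; omega),
    hstem_child (hne.mono (cluster_cons_subset_child h s j)) hlen]
  rfl

theorem stem_eq_hstem_trunk {i : ℕ} (hi : i + 1 ≤ c.m) {A : Set X} {l : Fin c.k}
    (hA : (A, l) ∈ partsT c.hk c.r c.P c.σ c.α c.β c.m (i + 1)) {t : Fin c.k} (ht : c.σ t = l)
    (hne : (hchild c.P c.σ c.β A i t).Nonempty) (v : X) :
    c.stem (i + 1) A l v = c.hstem i (hchild c.P c.σ c.β A i t) (c.σ t) v := by
  obtain ⟨h, hv, hlen, rfl, htr⟩ := exists_hist_of_mem_partsT hi hA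
  obtain rfl : t = c.trunk h := c.σ.injective (ht.trans htr.symm)
  rw [← child_eq hlen] at hne ⊢
  rw [stem_cluster hv.2 hlen, hstem_child hne hlen, histBranch, if_pos rfl]

end

theorem childStem_subset_branchDom {h : c.Hist} {s : Fin c.k} (hne : (c.child h s).Nonempty) :
    c.childStem h s ⊆ c.branchDom (c.histBranch ((s, 0) :: h)) := by
  by_cases hs : s = c.trunk h
  · subst hs
    rw [histBranch, if_pos rfl]
    exact (stemDom_mono _ _ hne (child_subset _ _) _).trans
      (clusterStem_subset_branchDom (hne.mono (child_subset _ _)))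
  · rw [histBranch, if_neg hs, childStem_eq_branchDom]

theorem hroot_of_nonempty {i : ℕ} {Q : Set X} {l : Fin c.k}
    (hne : (stemDom c.r c.P Q l).Nonempty) :
    c.hroot i Q l = c.hstem i Q l (c.closest (stemDom c.r c.P Q l)) :=
  if_pos hne

theorem hroot_of_not_nonempty {i : ℕ} {Q : Set X} {l : Fin c.k}
    (hne : ¬(stemDom c.r c.P Q l).Nonempty) :
    c.hroot i Q l = .inr (.inr (c.level i, c.cluster (c.parentHist i Q l), c.σ.symm l)) :=
  if_neg hne

theorem hroot_child_trunk {h : c.Hist} {i : ℕ} (hlen : h.length + (i + 1) = c.m)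
    (hne : (c.child h (c.trunk h)).Nonempty) :
    c.hroot i (c.child h (c.trunk h)) (c.σ (c.trunk h)) = c.trunkRoot h := by
  rw [trunkRoot, show c.m - (h.length + 1) = i by omega]
  by_cases hst : (c.childStem h (c.trunk h)).Nonempty
  · rw [hroot_of_nonempty hst, if_pos ⟨hne, hst⟩, hstem_child hne hlen, histBranch, if_pos rfl]
    rfl
  · rw [hroot_of_not_nonempty hst, if_neg fun ht => hst ht.2, parentHist_child hne hlen,
      Equiv.symm_apply_apply]

theorem parent_hroot_child_and_height {h : c.Hist} {i : ℕ} {s : Fin c.k} (hv : c.Valid h)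
    (hlen : h.length + (i + 1) = c.m) (hs : s ≠ c.trunk h) (hne : (c.child h s).Nonempty) :
    c.parent (c.hroot i (c.child h s) (c.σ s)) = c.trunkRoot h ∧
      c.height (c.hroot i (c.child h s) (c.σ s)) = c.attachHeight h + 2 ^ (i + 1) := by
  have hi : c.m - (h.length + 1) = i := by omega
  set b : c.Branch := some (c.level i, c.cluster h, s) with hb_def
  have hb : c.IsBranch b := ⟨hv.2, h, by rw [level_val (by omega)]; omega, rfl, hs⟩
  have hbase : c.branchBase b = c.trunkRoot h := by
    rw [branchBase, level_val (by omega), histAt_cluster hv.2 hlen]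
  have hdom : c.childStem h s = c.branchDom b := by rw [childStem_eq_branchDom, hi]
  have hattach :
      c.attachHeight (c.histAt ((c.level i).val + 1) (c.cluster h)) = c.attachHeight h := by
    rw [level_val (by omega), histAt_cluster hv.2 hlen]
  by_cases hst : (c.childStem h s).Nonempty
  · have hroot_eq : c.hroot i (c.child h s) (c.σ s) = .inl (b, c.closest (c.branchDom b)) := by
      rw [hroot_of_nonempty hst, hstem_child hne hlen, histBranch, if_neg hs, hi, ← hdom]
      rfl
    have hmem : c.closest (c.branchDom b) ∈ c.branchDom b := hdom ▸ c.closest_mem hst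
    rw [hroot_eq, parent_inl_closest hb hmem, height_inl hb hmem,
      branchOffset_add_dist_closest hb, hattach, level_val (by omega), hbase]
    exact ⟨rfl, rfl⟩
  · have hroot_eq :
        c.hroot i (c.child h s) (c.σ s) = .inr (.inr (c.level i, c.cluster h, s)) := by
      rw [hroot_of_not_nonempty hst, parentHist_child hne hlen, Equiv.symm_apply_apply]
    rw [hroot_eq, parent, if_pos hb, height, if_pos hb, hattach, level_val (by omega), hbase]
    exact ⟨rfl, rfl⟩

theorem pointVertex_eq {h : c.Hist} (hlen : h.length = c.m) {x : X} (hx : x ∈ c.cluster h)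
    (hne : (c.clusterStem h).Nonempty) :
    c.pointVertex x = .inl (c.histBranch h, c.closest (c.clusterStem h)) := by
  have hex :
      ∃ h' : c.Hist, h'.length = c.m ∧ x ∈ c.cluster h' ∧ (c.clusterStem h').Nonempty :=
    ⟨h, hlen, hx, hne⟩
  rw [pointVertex, dif_pos hex]
  obtain ⟨hlen', hx', -⟩ := hex.choose_spec
  rw [eq_of_cluster_inter_nonempty (by rw [hlen', hlen]) ⟨x, hx', hx⟩]

theorem exists_hroot_eq_hstem_closest {i : ℕ} {Q : Set X} {l : Fin c.k}
    (hne : (stemDom c.r c.P Q l).Nonempty) :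
    ∃ v ∈ stemDom c.r c.P Q l, (∀ w ∈ stemDom c.r c.P Q l, dist c.r v ≤ dist c.r w) ∧
      c.hroot i Q l = c.hstem i Q l v :=
  ⟨_, c.closest_mem hne, fun _ hw => c.dist_closest_le hw, hroot_of_nonempty hne⟩

theorem pointVertex_eq_inr {x : X} {z : X ⊕ (Fin (c.m + 1) × Set X × Fin c.k)}
    (hx : c.pointVertex x = .inr z) : z = .inl x := by
  rw [pointVertex] at hx
  split_ifs at hx
  exact (Sum.inr_injective hx).symm

section Scale0

variable (hβ : c.β < 2)
  (hpath : ∀ s, ∀ x ∈ c.P s, ∀ y ∈ c.P s, dist x y = |dist c.r x - dist c.r y|)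
  (hmin : ∀ x y : X, x ≠ y → 1 ≤ dist x y) (hm : 1 ≤ c.m)

include hβ hpath hmin hm

/-- A cluster of `C 0` lies in a band of width `1/4` around `c.r` and within `β/4` of its
trunk, whose distinct points are `1` apart. -/
theorem dist_lt_half_of_mem_clusterStem {h : c.Hist} (hlen : h.length = c.m) {x v : X}
    (hx : x ∈ c.cluster h) (hv : v ∈ c.clusterStem h) : dist x v < 1 / 2 := by
  obtain ⟨s, j, h₀, rfl⟩ : ∃ s j h₀, h = (s, j) :: h₀ := by
    rcases h with _ | ⟨⟨s, j⟩, h₀⟩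
    · simp only [List.length_nil] at hlen; omega
    · exact ⟨s, j, h₀, rfl⟩
  have hlen₀ : h₀.length + (0 + 1) = c.m := by simpa using hlen
  have hband : ∀ y ∈ c.cluster ((s, j) :: h₀),
      ((j : ℝ) - 1 + c.α) * (1 / 4) ≤ dist c.r y ∧
        dist c.r y < ((j : ℝ) + c.α) * (1 / 4) := by
    intro y hy
    rw [cluster_cons_eq hlen₀] at hy
    simpa using hy.2
  have hxv := abs_dist_sub_lt_of_mem_stemDom c.r c.P hband hx hv
  rw [cluster_cons_eq hlen₀] at hx
  obtain ⟨p, hp, hxp⟩ := hchild_subset_nbr _ _ _ _ _ _ hx.1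
  norm_num at hxp
  have hpx : |dist c.r p - dist c.r x| ≤ dist x p := by
    rw [dist_comm c.r p, dist_comm c.r x, dist_comm x p]
    exact abs_dist_sub_le p x c.r
  obtain rfl : p = v := eq_of_mem_path_of_abs_dist_sub_lt_one hpath hmin hp hv.1 <| by
    have := abs_sub_le (dist c.r p) (dist c.r x) (dist c.r v)
    linarith
  linarith

theorem dist_lt_half_of_pointVertex_eq_inl {x v : X} {b : c.Branch}
    (hx : c.pointVertex x = .inl (b, v)) : dist x v < 1 / 2 := by
  rw [pointVertex] at hx
  split_ifs at hx with hex
  obtain ⟨hlen, hxh, hne⟩ := hex.choose_spec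
  obtain ⟨-, rfl⟩ := Prod.ext_iff.1 (Sum.inl_injective hx)
  exact dist_lt_half_of_mem_clusterStem hβ hpath hmin hm hlen hxh (c.closest_mem hne)

theorem pointVertex_injective : Function.Injective c.pointVertex := by
  intro x y hxy
  rcases hfx : c.pointVertex x with ⟨b, v⟩ | z
  · have hx := dist_lt_half_of_pointVertex_eq_inl hβ hpath hmin hm hfx
    have hy := dist_lt_half_of_pointVertex_eq_inl hβ hpath hmin hm (hxy ▸ hfx)
    by_contra hne
    linarith [hmin x y hne, dist_triangle_right x y v]
  · exact Sum.inl_injective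
      ((pointVertex_eq_inr hfx).symm.trans (pointVertex_eq_inr (hxy ▸ hfx)))

theorem stem_zero_eq_pointVertex {A : Set X} {l : Fin c.k}
    (hA : (A, l) ∈ partsT c.hk c.r c.P c.σ c.α c.β c.m 0) {x v : X} (hx : x ∈ A)
    (hv : v ∈ stemDom c.r c.P A l) : c.stem 0 A l v = c.pointVertex x := by
  obtain ⟨h, hval, hlen, rfl, rfl⟩ := exists_hist_of_mem_partsT (Nat.zero_le _) hA
  rw [stem_cluster hval.2 hlen, pointVertex_eq (by omega) hx ⟨v, hv⟩]
  have hxv := dist_lt_half_of_mem_clusterStem hβ hpath hmin hm (by omega) hx hv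
  have hxw := dist_lt_half_of_mem_clusterStem hβ hpath hmin hm (by omega) hx
    (c.closest_mem ⟨v, hv⟩)
  by_contra hne
  have hvw : v ≠ c.closest (c.clusterStem h) := fun h => hne (by rw [h])
  linarith [hmin _ _ hvw, dist_triangle_left v (c.closest (c.clusterStem h)) x]

end Scale0

section Tree

variable (hr : ∀ s, c.r ∈ c.P s)
  (hpath : ∀ s, ∀ x ∈ c.P s, ∀ y ∈ c.P s, dist x y = |dist c.r x - dist c.r y|)

theorem isAncestor_inl {b : c.Branch} (hb : c.IsBranch b) {w : X} (hw : w ∈ c.branchDom b)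
    (v : X) (hv : v ∈ c.branchDom b) (hwv : dist c.r w ≤ dist c.r v) :
    (c.tree hr hpath).IsAncestor (.inl (b, w)) (.inl (b, v)) := by
  induction v using (Finite.wellFounded_of_trans_of_irrefl
    (fun a b : X => dist c.r a < dist c.r b)).induction with
  | _ v ih =>
    rcases hwv.eq_or_lt with heq | hlt
    · obtain ⟨l, hl⟩ := exists_branchDom_subset_path b
      rw [eq_of_mem_path_of_dist_eq hpath (hl hw) (hl hv) heq]
      exact HeightedTree.isAncestor_refl _
    · have hcl : v ≠ c.closest (c.branchDom b) := by
        rintro rfl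
        exact (c.dist_closest_le hw).not_gt hlt
      obtain ⟨hpmem, hplt⟩ := c.pred_mem ⟨w, hw, hlt⟩
      have hpar : (c.tree hr hpath).parent (.inl (b, v)) = .inl (b, c.pred (c.branchDom b) v) :=
        parent_inl_of_ne_closest hb hv hcl
      exact (ih _ hplt hpmem (c.dist_le_dist_pred hw hlt)).trans
        (hpar ▸ HeightedTree.isAncestor_parent _)

theorem tree_dist_inl {b : c.Branch} (hb : c.IsBranch b) {v w : X} (hv : v ∈ c.branchDom b)
    (hw : w ∈ c.branchDom b) :
    (c.tree hr hpath).dist (.inl (b, v)) (.inl (b, w)) = |dist c.r v - dist c.r w| := by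
  wlog hwv : dist c.r w ≤ dist c.r v generalizing v w
  · rw [HeightedTree.dist_comm, this hw hv (le_of_not_ge hwv), abs_sub_comm]
  rw [HeightedTree.dist_of_isAncestor (isAncestor_inl hr hpath hb hw v hv hwv)]
  show c.height (.inl (b, v)) - c.height (.inl (b, w)) = _
  rw [height_inl hb hv, height_inl hb hw, abs_of_nonneg (by linarith)]
  ring

theorem tree_dist_stem {i : ℕ} (hi : i ≤ c.m) {A : Set X} {l : Fin c.k}
    (hA : (A, l) ∈ partsT c.hk c.r c.P c.σ c.α c.β c.m i) {v w : X}
    (hv : v ∈ stemDom c.r c.P A l) (hw : w ∈ stemDom c.r c.P A l) :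
    (c.tree hr hpath).dist (c.stem i A l v) (c.stem i A l w) = |dist c.r v - dist c.r w| := by
  obtain ⟨h, hval, hlen, rfl, rfl⟩ := exists_hist_of_mem_partsT hi hA
  rw [stem_cluster hval.2 hlen, stem_cluster hval.2 hlen]
  exact tree_dist_inl hr hpath (isBranch_histBranch hval)
    (clusterStem_subset_branchDom hval.2 hv) (clusterStem_subset_branchDom hval.2 hw)

theorem tree_dist_hstem {i : ℕ} (hi : i + 1 ≤ c.m) {A : Set X}
    (hA : A ∈ parts c.hk c.r c.P c.σ c.α c.β c.m (i + 1)) {s : Fin c.k}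
    (hne : (hchild c.P c.σ c.β A i s).Nonempty) {v w : X}
    (hv : v ∈ stemDom c.r c.P (hchild c.P c.σ c.β A i s) (c.σ s))
    (hw : w ∈ stemDom c.r c.P (hchild c.P c.σ c.β A i s) (c.σ s)) :
    (c.tree hr hpath).dist (c.hstem i (hchild c.P c.σ c.β A i s) (c.σ s) v)
      (c.hstem i (hchild c.P c.σ c.β A i s) (c.σ s) w) = |dist c.r v - dist c.r w| := by
  obtain ⟨l, hA⟩ := hA
  obtain ⟨h, hval, hlen, rfl, -⟩ := exists_hist_of_mem_partsT hi hA
  rw [← child_eq hlen] at hne hv hw ⊢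
  rw [hstem_child hne hlen, hstem_child hne hlen]
  exact tree_dist_inl hr hpath (isBranch_histBranch_cons hval (by omega) s 0)
    (childStem_subset_branchDom hne hv) (childStem_subset_branchDom hne hw)

theorem tree_dist_hroot {i : ℕ} (hi : i + 1 ≤ c.m) {A : Set X} {l : Fin c.k}
    (hA : (A, l) ∈ partsT c.hk c.r c.P c.σ c.α c.β c.m (i + 1)) {t : Fin c.k} (ht : c.σ t = l)
    (hAt : (hchild c.P c.σ c.β A i t).Nonempty) {s : Fin c.k} (hst : s ≠ t)
    (hAs : (hchild c.P c.σ c.β A i s).Nonempty) :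
    (c.tree hr hpath).dist (c.hroot i (hchild c.P c.σ c.β A i s) (c.σ s))
      (c.hroot i (hchild c.P c.σ c.β A i t) (c.σ t)) = 2 ^ (i + 1) := by
  obtain ⟨h, hval, hlen, rfl, htr⟩ := exists_hist_of_mem_partsT hi hA
  obtain rfl : t = c.trunk h := c.σ.injective (ht.trans htr.symm)
  rw [← child_eq hlen] at hAt hAs
  rw [← child_eq hlen s, ← child_eq hlen (c.trunk h)]
  obtain ⟨hpar, hheight⟩ := parent_hroot_child_and_height hval hlen hst hAs
  set u := c.hroot i (c.child h s) (c.σ s)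
  rw [hroot_child_trunk hlen hAt, show c.trunkRoot h = (c.tree hr hpath).parent u from hpar.symm,
    HeightedTree.dist_of_isAncestor (HeightedTree.isAncestor_parent u)]
  show c.height u - c.height (c.parent u) = _
  rw [hheight, hpar, height_trunkRoot hval (by omega)]
  ring

end Tree

variable (c) in
def treeCon (hr : ∀ s, c.r ∈ c.P s)
    (hpath : ∀ s, ∀ x ∈ c.P s, ∀ y ∈ c.P s, dist x y = |dist c.r x - dist c.r y|)
    (hmin : ∀ x y : X, x ≠ y → 1 ≤ dist x y) (hm : 1 ≤ c.m) (hβ : c.β < 2) :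
    TreeCon c.hk c.r c.P c.σ c.α c.β c.m where
  T := ⟨c.Vertex, Fintype.ofFinite _, (c.tree hr hpath).toMetricSpace⟩
  tree := (c.tree hr hpath).dist_four_point
  f := c.pointVertex
  f_inj := pointVertex_injective hβ hpath hmin hm
  stem := c.stem
  hstem := c.hstem
  hroot := c.hroot
  stem_isom _ hi _ _ hA _ hv _ hw := tree_dist_stem hr hpath hi hA hv hw
  stem_base _ _ hA _ hx _ hv := stem_zero_eq_pointVertex hβ hpath hmin hm hA hx hv
  hstem_isom _ hi _ hA _ hne _ hv _ hw := tree_dist_hstem hr hpath hi hA hne hv hw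
  vert_glue _ hi _ hA _ _ hne v _ := stem_vchild_eq_hstem hi hA hne v
  stem_trunk _ hi _ _ hA _ ht hne v _ := stem_eq_hstem_trunk hi hA ht hne v
  hroot_spec _ _ _ _ _ hne := exists_hroot_eq_hstem_closest hne
  horiz_edge _ hi _ _ hA _ ht hAt _ hst hAs := tree_dist_hroot hr hpath hi hA ht hAt hst hAs

end Params

theorem logb_diam_nonneg (hmin : ∀ x y : X, x ≠ y → 1 ≤ dist x y) :
    0 ≤ Real.logb 2 (Metric.diam (Set.univ : Set X)) := by
  by_cases hX : (Set.univ : Set X).Subsingleton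
  · rw [Metric.diam_subsingleton hX, Real.logb_zero]
  · obtain ⟨x, -, y, -, hxy⟩ := Set.not_subsingleton_iff.1 hX
    exact Real.logb_nonneg one_lt_two ((hmin x y hxy).trans
      (Metric.dist_le_diam_of_mem Set.finite_univ.isBounded trivial trivial))

theorem statement5_general {k : ℕ} (hk : 0 < k) (r : X) (P : Fin k → Set X) (m : ℕ)
    (hr : ∀ s, r ∈ P s)
    (hpath : ∀ s, ∀ x ∈ P s, ∀ y ∈ P s, dist x y = |dist r x - dist r y|)
    (hmin : ∀ x y : X, x ≠ y → 1 ≤ dist x y)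
    (hm : (m : ℤ) = 2 + ⌈Real.logb 2 (Metric.diam (Set.univ : Set X))⌉)
    (σ : Equiv.Perm (Fin k)) (α β : ℝ)
    (hβ : β ∈ Set.Ico (1 : ℝ) 2) :
    Nonempty (TreeCon hk r P σ α β m) := by
  have hm₁ : 1 ≤ m := by
    have := Int.ceil_nonneg (logb_diam_nonneg hmin)
    omega
  exact ⟨Params.treeCon ⟨k, hk, r, P, σ, α, β, m⟩ hr hpath hmin hm₁ hβ.2⟩

/-- invariant (I). For every permutation `σ`, every `α ∈ [0,1)` and
`β ∈ [1,2)`, the recursive tree construction succeeds: there is construction data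
(`TreeCon`) for the alternating partitions; in particular, for every level `i ∈ {0,…,m}`
and every cluster `A ∈ C i` with trunk `P l`, the tree contains the stem of `A`: copies
of the points `{v ∈ P l : top A ≤ d r v ≤ bottom A}`, the tree distance between the
copies of any two such points `v, w` being `|d r v − d r w|` (field `stem_isom`). -/
theorem statement5 {k : ℕ} (hk : 0 < k) (r : X) (P : Fin k → Set X) (m : ℕ)
    (hr : ∀ s, r ∈ P s) (hcov : (⋃ s, P s) = Set.univ)
    (hpath : ∀ s, ∀ x ∈ P s, ∀ y ∈ P s, dist x y = |dist r x - dist r y|)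
    (hmin : ∀ x y : X, x ≠ y → 1 ≤ dist x y)
    (hm : (m : ℤ) = 2 + ⌈Real.logb 2 (Metric.diam (Set.univ : Set X))⌉)
    (σ : Equiv.Perm (Fin k)) (α β : ℝ)
    (hα : α ∈ Set.Ico (0 : ℝ) 1) (hβ : β ∈ Set.Ico (1 : ℝ) 2) :
    Nonempty (TreeCon hk r P σ α β m) :=
  statement5_general hk r P m hr hpath hmin hm σ α β hβ
end
end

section
/- For every permutation σ of {1,…,k}, every α ∈ [0,1), every β ∈ [1,2), and all u ≠ v in X, there exist s ∈ {1,…,k} and a level i ∈ {0,…,m−1} such that P_s cuts {u,v} horizontally at level i or P_s cuts {u,v} vertically at level i. -/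
open Set

noncomputable section

variable {X : Type} [MetricSpace X] [Fintype X]

/-- `TrunkOf … i x l`: the path `P l` is the trunk of the cluster `C i (x)` of `C i`
containing `x`. -/
def TrunkOf {k : ℕ} (hk : 0 < k) (r : X) (P : Fin k → Set X) (σ : Equiv.Perm (Fin k))
    (α β : ℝ) (m i : ℕ) (x : X) (l : Fin k) : Prop :=
  ∃ A : Set X, (A, l) ∈ partsT hk r P σ α β m i ∧ x ∈ A

/-- `u` and `v` lie in the same cluster of `C i`. -/
def SameCluster {k : ℕ} (hk : 0 < k) (r : X) (P : Fin k → Set X) (σ : Equiv.Perm (Fin k))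
    (α β : ℝ) (m i : ℕ) (u v : X) : Prop :=
  ∃ A ∈ parts hk r P σ α β m i, u ∈ A ∧ v ∈ A

/-- `P s` settles `{u,v}` at level `i`: `u` and `v` are in the same cluster of `C (i+1)`,
and `P s` is the first path in the order `σ 0, σ 1, …` that is the trunk of at least one
of `C i (u)`, `C i (v)`. -/
def Settles {k : ℕ} (hk : 0 < k) (r : X) (P : Fin k → Set X) (σ : Equiv.Perm (Fin k))
    (α β : ℝ) (m : ℕ) (s : Fin k) (i : ℕ) (u v : X) : Prop :=
  SameCluster hk r P σ α β m (i + 1) u v ∧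
    ∃ s' : Fin k, σ s' = s ∧
      (TrunkOf hk r P σ α β m i u (σ s') ∨ TrunkOf hk r P σ α β m i v (σ s')) ∧
      ∀ t' : Fin k, t' < s' →
        ¬(TrunkOf hk r P σ α β m i u (σ t') ∨ TrunkOf hk r P σ α β m i v (σ t'))

/-- `P s` cuts `{u,v}` horizontally at level `i`: it settles `{u,v}` at level `i` and is
the trunk of exactly one of `C i (u)`, `C i (v)`. -/
def CutsH {k : ℕ} (hk : 0 < k) (r : X) (P : Fin k → Set X) (σ : Equiv.Perm (Fin k))
    (α β : ℝ) (m : ℕ) (s : Fin k) (i : ℕ) (u v : X) : Prop :=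
  Settles hk r P σ α β m s i u v ∧
    Xor' (TrunkOf hk r P σ α β m i u s) (TrunkOf hk r P σ α β m i v s)

/-- `P s` cuts `{u,v}` vertically at level `i`: `u` and `v` lie in the same cluster `A`
of `C (i+1)` and in the same horizontal child of `A`, whose trunk is `P s`, and
`C i (u) ≠ C i (v)`. -/
def CutsV {k : ℕ} (hk : 0 < k) (r : X) (P : Fin k → Set X) (σ : Equiv.Perm (Fin k))
    (α β : ℝ) (m : ℕ) (s : Fin k) (i : ℕ) (u v : X) : Prop :=
  (∃ A ∈ parts hk r P σ α β m (i + 1), u ∈ A ∧ v ∈ A ∧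
      ∃ s' : Fin k, σ s' = s ∧ u ∈ hchild P σ β A i s' ∧ v ∈ hchild P σ β A i s') ∧
    ¬SameCluster hk r P σ α β m i u v

/-!
Let `i + 1` be the lowest level at which `u` and `v` still share a cluster `A`; it exists
because `C m = {X}`, and it is positive because the clusters of `C 0` are singletons (a point
within `β/4 < 1` of a path lies on it, and two points of one path in the same distance band
from `r` are closer than `1`). Among the trunks of `C i (u)` and `C i (v)` take the first one
in the order `σ`. If it is the trunk of only one of them, it cuts `{u, v}` horizontally;
otherwise both points lie in the horizontal child of `A` with that trunk, which is then split
vertically between them.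
-/

section Clusters

omit [Fintype X]

variable {k : ℕ} {hk : 0 < k} {r : X} {P : Fin k → Set X} {σ : Equiv.Perm (Fin k)} {α β : ℝ}

theorem hchild_disjoint {A : Set X} {i : ℕ} {s s' : Fin k} (hss : s ≠ s') :
    Disjoint (hchild P σ β A i s) (hchild P σ β A i s') := by
  rw [Set.disjoint_left]
  intro x h h'
  rcases hss.lt_or_gt with hlt | hlt
  · exact h'.2 (mem_iUnion₂.2 ⟨s, hlt, h.1⟩)
  · exact h.2 (mem_iUnion₂.2 ⟨s', hlt, h'.1⟩)

theorem vchild_disjoint {A : Set X} {i : ℕ} {s s' : Fin k} {j j' : ℕ} (hne : (s, j) ≠ (s', j')) :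
    Disjoint (vchild r P σ α β A i s j) (vchild r P σ α β A i s' j') := by
  rcases eq_or_ne s s' with rfl | hss
  · have hjj : j ≠ j' := fun h => hne (by rw [h])
    rw [Set.disjoint_left]
    rintro x ⟨-, hlo, hhi⟩ ⟨-, hlo', hhi'⟩
    have hc : (0 : ℝ) < 2 ^ i / 4 := by positivity
    rcases hjj.lt_or_gt with h | h
    · have : (j : ℝ) + 1 ≤ j' := by exact_mod_cast h
      nlinarith
    · have : (j' : ℝ) + 1 ≤ j := by exact_mod_cast h
      nlinarith
  · exact (hchild_disjoint hss).mono (fun _ hx => hx.1) (fun _ hx => hx.1)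

theorem eq_of_mem_partsTAux {m n : ℕ} {B B' : Set X} {l l' : Fin k}
    (hB : (B, l) ∈ partsTAux hk r P σ α β m n) (hB' : (B', l') ∈ partsTAux hk r P σ α β m n)
    {x : X} (hx : x ∈ B) (hx' : x ∈ B') : B = B' := by
  induction n generalizing B B' l l' with
  | zero =>
    simp only [partsTAux, mem_singleton_iff, Prod.mk.injEq] at hB hB'
    rw [hB.1, hB'.1]
  | succ n ih =>
    obtain ⟨-, A, ⟨_, hA⟩, s, j, rfl, -⟩ := hB
    obtain ⟨-, A', ⟨_, hA'⟩, s', j', rfl, -⟩ := hB'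
    obtain rfl : A = A' := ih hA hA' hx.1.1.1 hx'.1.1.1
    by_contra hne
    have hsj : (s, j) ≠ (s', j') := fun h => hne (by simp_all)
    exact (vchild_disjoint hsj).notMem_of_mem_left hx hx'

theorem eq_of_mem_partsT {m i : ℕ} {B B' : Set X} {l l' : Fin k}
    (hB : (B, l) ∈ partsT hk r P σ α β m i) (hB' : (B', l') ∈ partsT hk r P σ α β m i)
    {x : X} (hx : x ∈ B) (hx' : x ∈ B') : B = B' :=
  eq_of_mem_partsTAux hB hB' hx hx'

theorem mem_partsT_iff {m i : ℕ} (him : i < m) {B : Set X} {l : Fin k} :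
    (B, l) ∈ partsT hk r P σ α β m i ↔ B.Nonempty ∧
      ∃ A, (∃ l', (A, l') ∈ partsT hk r P σ α β m (i + 1)) ∧
        ∃ s j, B = vchild r P σ α β A i s j ∧ l = σ s := by
  have hsucc : m - i = m - (i + 1) + 1 := by omega
  have hlevel : m - (m - (i + 1) + 1) = i := by omega
  simp only [partsT, hsucc, partsTAux, hlevel]
  rfl

theorem sameCluster_of_le {m i : ℕ} (hmi : m ≤ i) (u v : X) :
    SameCluster hk r P σ α β m i u v := by
  refine ⟨univ, ⟨σ ⟨0, hk⟩, ?_⟩, mem_univ u, mem_univ v⟩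
  simp only [partsT, Nat.sub_eq_zero_of_le hmi, partsTAux, mem_singleton_iff]

theorem exists_nat_mem_band {a c d : ℝ} (ha : a ∈ Ico (0 : ℝ) 1) (hc : 0 < c) (hd : 0 ≤ d) :
    ∃ j : ℕ, ((j : ℝ) - 1 + a) * c ≤ d ∧ d < ((j : ℝ) + a) * c := by
  have hy : 0 ≤ d / c + 1 - a := by
    have := div_nonneg hd hc.le
    linarith [ha.2]
  refine ⟨⌊d / c + 1 - a⌋₊, ?_, ?_⟩
  · have := Nat.floor_le hy
    rw [← le_div_iff₀ hc]
    linarith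
  · have := Nat.lt_floor_add_one (d / c + 1 - a)
    rw [← div_lt_iff₀ hc]
    linarith

theorem exists_mem_hchild (hcov : (⋃ s, P s) = univ) (hβ : 0 ≤ β) {A : Set X} {x : X}
    (hx : x ∈ A) (i : ℕ) : ∃ s, x ∈ hchild P σ β A i s := by
  have hδ : 0 ≤ β * (2 ^ i / 4) := by positivity
  have hnbr : ∀ t, x ∈ P t → x ∈ nbr (P t) (β * (2 ^ i / 4)) := fun t ht =>
    ⟨x, ht, by rwa [dist_self]⟩
  obtain ⟨t, ht⟩ := mem_iUnion.1 (hcov ▸ mem_univ x : x ∈ ⋃ s, P s)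
  obtain ⟨s, hs, hmin⟩ := wellFounded_lt.has_min {s | x ∈ nbr (P (σ s)) (β * (2 ^ i / 4))}
    ⟨σ.symm t, hnbr _ (by rwa [Equiv.apply_symm_apply])⟩
  refine ⟨s, ⟨hx, hs⟩, fun hmem => ?_⟩
  obtain ⟨t', hts, -, ht'⟩ := mem_iUnion₂.1 hmem
  exact hmin t' ht' hts

theorem exists_mem_vchild (hα : α ∈ Ico (0 : ℝ) 1) (hβ : 0 ≤ β) (hcov : (⋃ s, P s) = univ)
    {A : Set X} {x : X} (hx : x ∈ A) (i : ℕ) : ∃ s j, x ∈ vchild r P σ α β A i s j := by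
  obtain ⟨s, hs⟩ := exists_mem_hchild hcov hβ hx i
  obtain ⟨j, hj⟩ :=
    exists_nat_mem_band hα (by positivity : (0 : ℝ) < 2 ^ i / 4) (dist_nonneg (x := r) (y := x))
  exact ⟨s, j, hs, hj⟩

theorem exists_trunkOf (hα : α ∈ Ico (0 : ℝ) 1) (hβ : 0 ≤ β) (hcov : (⋃ s, P s) = univ)
    {m i : ℕ} (him : i < m) {A : Set X} {l : Fin k}
    (hA : (A, l) ∈ partsT hk r P σ α β m (i + 1)) {x : X} (hx : x ∈ A) :
    ∃ s, TrunkOf hk r P σ α β m i x (σ s) := by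
  obtain ⟨s, j, hxB⟩ := exists_mem_vchild hα hβ hcov hx i
  exact ⟨s, _, (mem_partsT_iff him).2 ⟨⟨x, hxB⟩, A, ⟨l, hA⟩, s, j, rfl, rfl⟩, hxB⟩

theorem TrunkOf.mem_hchild {m i : ℕ} (him : i < m) {A : Set X} {l : Fin k}
    (hA : (A, l) ∈ partsT hk r P σ α β m (i + 1)) {x : X} (hx : x ∈ A) {s : Fin k}
    (htrunk : TrunkOf hk r P σ α β m i x (σ s)) : x ∈ hchild P σ β A i s := by
  obtain ⟨B, hB, hxB⟩ := htrunk
  obtain ⟨-, A', ⟨l', hA'⟩, t, j, rfl, hts⟩ := (mem_partsT_iff him).1 hB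
  obtain rfl := σ.injective hts
  obtain rfl := eq_of_mem_partsT hA' hA hxB.1.1.1 hx
  exact hxB.1

theorem mem_of_mem_nbr (hmin : ∀ x y : X, x ≠ y → 1 ≤ dist x y) {Q : Set X} {δ : ℝ}
    (hδ : δ < 1) {x : X} (hx : x ∈ nbr Q δ) : x ∈ Q := by
  obtain ⟨p, hp, hxp⟩ := hx
  obtain rfl : x = p := by
    by_contra hne
    linarith [hmin x p hne]
  exact hp

theorem not_sameCluster_zero {m : ℕ} (hm : 0 < m)
    (hpath : ∀ s, ∀ x ∈ P s, ∀ y ∈ P s, dist x y = |dist r x - dist r y|)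
    (hmin : ∀ x y : X, x ≠ y → 1 ≤ dist x y) (hβ : β < 2) {u v : X} (huv : u ≠ v) :
    ¬SameCluster hk r P σ α β m 0 u v := by
  rintro ⟨B, ⟨l, hB⟩, hu, hv⟩
  obtain ⟨-, A, -, s, j, rfl, -⟩ := (mem_partsT_iff hm).1 hB
  obtain ⟨⟨⟨-, hu⟩, -⟩, hu₁, hu₂⟩ := hu
  obtain ⟨⟨⟨-, hv⟩, -⟩, hv₁, hv₂⟩ := hv
  have hδ : β * ((2 : ℝ) ^ 0 / 4) < 1 := by linarith
  have hdist := hpath (σ s) u (mem_of_mem_nbr hmin hδ hu) v (mem_of_mem_nbr hmin hδ hv)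
  have hband : |dist r u - dist r v| < 1 := by
    rw [abs_sub_lt_iff]
    constructor <;> linarith
  linarith [hmin u v huv]

theorem exists_cuts_of_separated (hα : α ∈ Ico (0 : ℝ) 1) (hβ : 0 ≤ β)
    (hcov : (⋃ s, P s) = univ) {m i : ℕ} (him : i < m) {u v : X}
    (hsame : SameCluster hk r P σ α β m (i + 1) u v)
    (hsep : ¬SameCluster hk r P σ α β m i u v) :
    ∃ s, CutsH hk r P σ α β m s i u v ∨ CutsV hk r P σ α β m s i u v := by
  obtain ⟨A, ⟨l, hA⟩, hu, hv⟩ := hsame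
  obtain ⟨su, hsu⟩ := exists_trunkOf hα hβ hcov him hA hu
  obtain ⟨s, hs, hfirst⟩ := wellFounded_lt.has_min
    {t | TrunkOf hk r P σ α β m i u (σ t) ∨ TrunkOf hk r P σ α β m i v (σ t)} ⟨su, .inl hsu⟩
  have hsettles : Settles hk r P σ α β m (σ s) i u v :=
    ⟨⟨A, ⟨l, hA⟩, hu, hv⟩, s, rfl, hs, fun t hts ht => hfirst t ht hts⟩
  by_cases hboth : TrunkOf hk r P σ α β m i u (σ s) ∧ TrunkOf hk r P σ α β m i v (σ s)
  · exact ⟨σ s, .inr ⟨⟨A, ⟨l, hA⟩, hu, hv, s, rfl, hboth.1.mem_hchild him hA hu,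
      hboth.2.mem_hchild him hA hv⟩, hsep⟩⟩
  · exact ⟨σ s, .inl ⟨hsettles, (xor_iff_or_and_not_and _ _).2 ⟨hs, hboth⟩⟩⟩

end Clusters

theorem pos_of_eq_two_add_ceil_logb_diam {m : ℕ}
    (hmin : ∀ x y : X, x ≠ y → 1 ≤ dist x y) {u v : X} (huv : u ≠ v)
    (hm : (m : ℤ) = 2 + ⌈Real.logb 2 (Metric.diam (univ : Set X))⌉) : 0 < m := by
  have hdiam : 1 ≤ Metric.diam (univ : Set X) :=
    (hmin u v huv).trans (Metric.dist_le_diam_of_mem finite_univ.isBounded trivial trivial)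
  have := Int.ceil_nonneg (Real.logb_nonneg one_lt_two hdiam)
  omega

theorem statement8_general {k : ℕ} (hk : 0 < k) (r : X) (P : Fin k → Set X) (m : ℕ)
    (hcov : (⋃ s, P s) = Set.univ)
    (hpath : ∀ s, ∀ x ∈ P s, ∀ y ∈ P s, dist x y = |dist r x - dist r y|)
    (hmin : ∀ x y : X, x ≠ y → 1 ≤ dist x y)
    (hm : (m : ℤ) = 2 + ⌈Real.logb 2 (Metric.diam (Set.univ : Set X))⌉)
    (σ : Equiv.Perm (Fin k)) (α β : ℝ)
    (hα : α ∈ Set.Ico (0 : ℝ) 1) (hβ : β ∈ Set.Ico (1 : ℝ) 2)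
    (u v : X) (huv : u ≠ v) :
    ∃ (s : Fin k) (i : ℕ), i < m ∧
      (CutsH hk r P σ α β m s i u v ∨ CutsV hk r P σ α β m s i u v) := by
  have hm₀ : 0 < m := pos_of_eq_two_add_ceil_logb_diam hmin huv hm
  obtain ⟨i, hsep, hsame⟩ :=
    Nat.exists_not_and_succ_of_not_zero_of_exists (p := (SameCluster hk r P σ α β m · u v))
      (not_sameCluster_zero hm₀ hpath hmin hβ.2 huv) ⟨m, sameCluster_of_le le_rfl u v⟩
  have him : i < m := by
    by_contra! hmi
    exact hsep (sameCluster_of_le hmi u v)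
  obtain ⟨s, hcut⟩ :=
    exists_cuts_of_separated hα (zero_le_one.trans hβ.1) hcov him hsame hsep
  exact ⟨s, i, him, hcut⟩

/-- For every permutation `σ`, every `α ∈ [0,1)`, `β ∈ [1,2)`, and all
`u ≠ v` in `X`, some path `P s` cuts `{u,v}` horizontally or vertically at some level
`i ∈ {0,…,m-1}`. -/
theorem statement8 {k : ℕ} (hk : 0 < k) (r : X) (P : Fin k → Set X) (m : ℕ)
    (hr : ∀ s, r ∈ P s) (hcov : (⋃ s, P s) = Set.univ)
    (hpath : ∀ s, ∀ x ∈ P s, ∀ y ∈ P s, dist x y = |dist r x - dist r y|)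
    (hmin : ∀ x y : X, x ≠ y → 1 ≤ dist x y)
    (hm : (m : ℤ) = 2 + ⌈Real.logb 2 (Metric.diam (Set.univ : Set X))⌉)
    (σ : Equiv.Perm (Fin k)) (α β : ℝ)
    (hα : α ∈ Set.Ico (0 : ℝ) 1) (hβ : β ∈ Set.Ico (1 : ℝ) 2)
    (u v : X) (huv : u ≠ v) :
    ∃ (s : Fin k) (i : ℕ), i < m ∧
      (CutsH hk r P σ α β m s i u v ∨ CutsV hk r P σ α β m s i u v) :=
  statement8_general hk r P m hcov hpath hmin hm σ α β hα hβ u v huv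
end
end

section
/- Fix u ≠ v in X and assume the paths are indexed so that d(P_1,{u,v}) ≤ d(P_2,{u,v}) ≤ … ≤ d(P_k,{u,v}), where d(P,{u,v}) = min(min_{p∈P} d(u,p), min_{p∈P} d(v,p)). Then for every s ∈ {1,…,k} and every level i ∈ {0,…,m−1}, the probability over the random choices (σ, α, β) that P_s cuts {u,v} vertically at level i is at most (1/s)·d(u,v)/2^{i−2}. -/
open Set

noncomputable section

variable {X : Type} [MetricSpace X] [Fintype X]

open MeasureTheory in
/-- The probability, over a uniformly random permutation `σ` of `{1,…,k}`, a uniform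
`α ∈ [0,1)` and a uniform `β ∈ [1,2)` (independent), that `P s` cuts `{u,v}` horizontally
at level `i` (note both `[0,1)` and `[1,2)` have Lebesgue measure `1`). -/
def PrCutH {k : ℕ} (hk : 0 < k) (r : X) (P : Fin k → Set X) (m : ℕ)
    (s : Fin k) (i : ℕ) (u v : X) : ℝ :=
  (∑ σ : Equiv.Perm (Fin k),
      (volume {p : ℝ × ℝ | p.1 ∈ Set.Ico (0 : ℝ) 1 ∧ p.2 ∈ Set.Ico (1 : ℝ) 2 ∧
        CutsH hk r P σ p.1 p.2 m s i u v}).toReal) /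
    (Fintype.card (Equiv.Perm (Fin k)))

open MeasureTheory in
/-- The probability, over a uniformly random permutation `σ` of `{1,…,k}`, a uniform
`α ∈ [0,1)` and a uniform `β ∈ [1,2)` (independent), that `P s` cuts `{u,v}` vertically
at level `i`. -/
def PrCutV {k : ℕ} (hk : 0 < k) (r : X) (P : Fin k → Set X) (m : ℕ)
    (s : Fin k) (i : ℕ) (u v : X) : ℝ :=
  (∑ σ : Equiv.Perm (Fin k),
      (volume {p : ℝ × ℝ | p.1 ∈ Set.Ico (0 : ℝ) 1 ∧ p.2 ∈ Set.Ico (1 : ℝ) 2 ∧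
        CutsV hk r P σ p.1 p.2 m s i u v}).toReal) /
    (Fintype.card (Equiv.Perm (Fin k)))

/-!
A vertical cut of `{u,v}` by `P s` at level `i` needs two things. First, `σ` must put `s` before
every `t < s`: such a `P t` is at least as close to `{u,v}` as `P s`, so coming earlier it would
take `u` or `v` into an earlier horizontal child. This happens for at most a `1/(s+1)` fraction of
the permutations, because `(t, σ) ↦ swap s t * σ` is injective on such pairs with `t ≤ s`.
Second, some strip boundary `(n + α)·2^{i-2}` must separate `d(r,u)` from `d(r,v)`; the `α`
doing this form a set of measure at most `|d(r,u) - d(r,v)|/2^{i-2} ≤ d(u,v)/2^{i-2}`.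
-/

open MeasureTheory

theorem volume_setOf_intCast_add_mem_le {S : Set ℝ} (hS : MeasurableSet S) :
    volume {α : ℝ | α ∈ Ico (0 : ℝ) 1 ∧ ∃ n : ℤ, (n : ℝ) + α ∈ S} ≤ volume S := by
  have hcover : {α : ℝ | α ∈ Ico (0 : ℝ) 1 ∧ ∃ n : ℤ, (n : ℝ) + α ∈ S} ⊆
      ⋃ n : ℤ, ((n : ℝ) + ·) ⁻¹' (S ∩ Ico (n : ℝ) (n + 1)) := by
    rintro α ⟨⟨h0, h1⟩, n, hn⟩
    exact mem_iUnion.2 ⟨n, hn, by simp only [mem_Ico]; constructor <;> linarith⟩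
  calc _ ≤ volume (⋃ n : ℤ, ((n : ℝ) + ·) ⁻¹' (S ∩ Ico (n : ℝ) (n + 1))) := measure_mono hcover
    _ ≤ ∑' n : ℤ, volume (((n : ℝ) + ·) ⁻¹' (S ∩ Ico (n : ℝ) (n + 1))) := measure_iUnion_le _
    _ = ∑' n : ℤ, volume (S ∩ Ico (n : ℝ) (n + 1)) := by simp only [measure_preimage_add]
    _ = volume (⋃ n : ℤ, S ∩ Ico (n : ℝ) (n + 1)) :=
        (measure_iUnion (fun _ _ hmn => (pairwise_disjoint_Ico_intCast (α := ℝ) hmn).mono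
          inter_subset_right inter_subset_right) fun _ => hS.inter measurableSet_Ico).symm
    _ = volume S := by rw [← inter_iUnion, iUnion_Ico_intCast, inter_univ]

theorem exists_intCast_add_mem_Ioc_of_floor_ne {y₁ y₂ α : ℝ} (h : ⌊y₁ - α⌋ ≠ ⌊y₂ - α⌋) :
    ∃ n : ℤ, (n : ℝ) + α ∈ Ioc (min y₁ y₂) (max y₁ y₂) := by
  wlog hle : y₁ ≤ y₂ generalizing y₁ y₂
  · simpa only [min_comm, max_comm] using this h.symm (le_of_not_ge hle)
  have hlt : ⌊y₁ - α⌋ < ⌊y₂ - α⌋ := (Int.floor_mono (by linarith)).lt_of_ne h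
  have hlt' : (⌊y₁ - α⌋ : ℝ) + 1 ≤ ⌊y₂ - α⌋ := by exact_mod_cast hlt
  refine ⟨⌊y₂ - α⌋, ?_, ?_⟩
  · rw [min_eq_left hle]
    linarith [Int.lt_floor_add_one (y₁ - α)]
  · rw [max_eq_right hle]
    linarith [Int.floor_le (y₂ - α)]

section FirstInRandomOrder

variable {ι : Type*} [LinearOrder ι]

theorem symm_swap_mul_lt_symm_swap_mul {T : Finset ι} {s t y : ι} {σ : Equiv.Perm ι}
    (hσ : ∀ x ∈ T, σ.symm s < σ.symm x) (ht : t ∈ insert s T) (hy : y ∈ insert s T)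
    (hyt : y ≠ t) : (Equiv.swap s t * σ).symm t < (Equiv.swap s t * σ).symm y := by
  simp only [Equiv.Perm.mul_def, Equiv.symm_trans_apply, Equiv.symm_swap,
    Equiv.swap_apply_right]
  apply hσ
  rcases eq_or_ne y s with rfl | hys
  · rw [Equiv.swap_apply_left]
    exact (Finset.mem_insert.1 ht).resolve_left (Ne.symm hyt)
  · rw [Equiv.swap_apply_of_ne_of_ne hys hyt]
    exact (Finset.mem_insert.1 hy).resolve_left hys

/-- `t` is recovered from `swap s t * σ` as the element of `insert s T` that comes first. -/
theorem card_add_one_mul_card_filter_symm_lt_le [Fintype ι] {T : Finset ι} {s : ι} (hs : s ∉ T) :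
    (T.card + 1) * (Finset.univ.filter fun σ : Equiv.Perm ι => ∀ x ∈ T, σ.symm s < σ.symm x).card
      ≤ Fintype.card (Equiv.Perm ι) := by
  rw [← Finset.card_insert_of_notMem hs, ← Finset.card_product, ← Finset.card_univ]
  refine Finset.card_le_card_of_injOn (fun p => Equiv.swap s p.1 * p.2)
    (fun _ _ => Finset.mem_coe.2 (Finset.mem_univ _)) ?_
  rintro ⟨t₁, σ₁⟩ h₁ ⟨t₂, σ₂⟩ h₂ heq
  simp only [Finset.coe_product, mem_prod, Finset.mem_coe, Finset.mem_filter] at h₁ h₂ heq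
  obtain rfl : t₁ = t₂ := by
    by_contra hne
    have h12 := symm_swap_mul_lt_symm_swap_mul h₁.2.2 h₁.1 h₂.1 (Ne.symm hne)
    have h21 := symm_swap_mul_lt_symm_swap_mul h₂.2.2 h₂.1 h₁.1 hne
    rw [heq] at h12
    exact lt_asymm h12 h21
  rw [mul_left_cancel heq]

end FirstInRandomOrder

section Clusters

variable {k : ℕ} {P : Fin k → Set X} {σ : Equiv.Perm (Fin k)} {α β : ℝ} {A : Set X} {i : ℕ}

omit [Fintype X] in
theorem sInf_min_dist_le_of_mem_nbr {Q : Set X} {δ : ℝ} {u v : X} (hu : u ∈ nbr Q δ) :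
    sInf ((fun p => min (dist u p) (dist v p)) '' Q) ≤ δ := by
  obtain ⟨p, hp, hup⟩ := hu
  have hbdd : BddBelow ((fun p => min (dist u p) (dist v p)) '' Q) :=
    ⟨0, by rintro _ ⟨q, -, rfl⟩; exact le_min dist_nonneg dist_nonneg⟩
  exact (csInf_le hbdd ⟨p, hp, rfl⟩).trans ((min_le_left _ _).trans hup)

theorem mem_nbr_or_mem_nbr_of_sInf_le {Q : Set X} (hQ : Q.Nonempty) {δ : ℝ} {u v : X}
    (h : sInf ((fun p => min (dist u p) (dist v p)) '' Q) ≤ δ) :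
    u ∈ nbr Q δ ∨ v ∈ nbr Q δ := by
  obtain ⟨p, hp, hpmin⟩ :=
    (hQ.image fun p => min (dist u p) (dist v p)).csInf_mem (Q.toFinite.image _)
  rw [← hpmin] at h
  exact (min_le_iff.1 h).imp (fun h => ⟨p, hp, h⟩) (fun h => ⟨p, hp, h⟩)

omit [Fintype X] in
theorem notMem_hchild_of_mem_nbr {s t : Fin k} (hts : t < s) {x : X} (hxA : x ∈ A)
    (hx : x ∈ nbr (P (σ t)) (β * (2 ^ i / 4))) : x ∉ hchild P σ β A i s :=
  fun h => h.2 (mem_iUnion₂.2 ⟨t, hts, hxA, hx⟩)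

omit [Fintype X] in
theorem mem_vchild_floor {r x : X} {s : Fin k} (hx : x ∈ hchild P σ β A i s) (hα : α < 1) :
    x ∈ vchild r P σ α β A i s (⌊dist r x / (2 ^ i / 4) - α⌋ + 1).toNat := by
  have hδ : (0 : ℝ) < 2 ^ i / 4 := by positivity
  set y := dist r x / (2 ^ i / 4) with hy_def
  have hy : 0 ≤ y := div_nonneg dist_nonneg hδ.le
  have hfloor : -1 ≤ ⌊y - α⌋ := Int.le_floor.2 (by push_cast; linarith)
  have hcast : (((⌊y - α⌋ + 1).toNat : ℕ) : ℝ) = ⌊y - α⌋ + 1 := by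
    rw [← Int.cast_natCast, Int.toNat_of_nonneg (by omega)]
    push_cast
    rfl
  refine ⟨hx, ?_, ?_⟩
  · rw [← le_div_iff₀ hδ, hcast]
    linarith [Int.floor_le (y - α)]
  · rw [← div_lt_iff₀ hδ, hcast]
    linarith [Int.lt_floor_add_one (y - α)]

omit [Fintype X] in
theorem vchild_mem_parts {hk : 0 < k} {r : X} {m : ℕ} (hA : A ∈ parts hk r P σ α β m (i + 1))
    (hi : i < m) {s : Fin k} {j : ℕ} (hne : (vchild r P σ α β A i s j).Nonempty) :
    vchild r P σ α β A i s j ∈ parts hk r P σ α β m i := by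
  obtain ⟨l, hl⟩ := hA
  refine ⟨σ s, ?_⟩
  have hlevel : m - i = m - (i + 1) + 1 := by omega
  unfold partsT at hl ⊢
  rw [hlevel, partsTAux]
  refine ⟨hne, A, ⟨l, hl⟩, s, j, ?_, rfl⟩
  rw [show m - (m - (i + 1) + 1) = i by omega]

end Clusters

section CutsV

variable {k : ℕ} {hk : 0 < k} {r : X} {P : Fin k → Set X} {σ : Equiv.Perm (Fin k)} {α β : ℝ}
  {m : ℕ} {s : Fin k} {i : ℕ} {u v : X}

theorem CutsV.symm_lt_symm (hr : ∀ s, r ∈ P s)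
    (hord : ∀ s t : Fin k, s ≤ t →
      sInf ((fun p => min (dist u p) (dist v p)) '' P s) ≤
        sInf ((fun p => min (dist u p) (dist v p)) '' P t))
    (h : CutsV hk r P σ α β m s i u v) {t : Fin k} (ht : t < s) : σ.symm s < σ.symm t := by
  obtain ⟨⟨A, -, huA, hvA, s', rfl, hu, hv⟩, -⟩ := h
  rw [Equiv.symm_apply_apply]
  by_contra! hle
  have hlt : σ.symm t < s' := hle.lt_of_ne (by rintro rfl; simp at ht)
  have hnear := mem_nbr_or_mem_nbr_of_sInf_le ⟨r, hr t⟩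
    ((hord t (σ s') ht.le).trans (sInf_min_dist_le_of_mem_nbr (v := v) hu.1.2))
  rw [← σ.apply_symm_apply t] at hnear
  rcases hnear with hun | hvn
  · exact notMem_hchild_of_mem_nbr hlt huA hun hu
  · exact notMem_hchild_of_mem_nbr hlt hvA hvn hv

omit [Fintype X] in
theorem CutsV.exists_intCast_add_mem_Ioc (hi : i < m) (hα : α < 1)
    (h : CutsV hk r P σ α β m s i u v) :
    ∃ n : ℤ, (n : ℝ) + α ∈ Ioc (min (dist r u / (2 ^ i / 4)) (dist r v / (2 ^ i / 4)))
      (max (dist r u / (2 ^ i / 4)) (dist r v / (2 ^ i / 4))) := by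
  obtain ⟨⟨A, hA, -, -, s', -, hu, hv⟩, hsep⟩ := h
  refine exists_intCast_add_mem_Ioc_of_floor_ne fun heq => hsep ?_
  have hu' := mem_vchild_floor (r := r) hu hα
  have hv' := mem_vchild_floor (r := r) hv hα
  rw [← heq] at hv'
  exact ⟨_, vchild_mem_parts hA hi ⟨u, hu'⟩, hu', hv'⟩

theorem volume_cutsV_toReal_le (hr : ∀ s, r ∈ P s)
    (hord : ∀ s t : Fin k, s ≤ t →
      sInf ((fun p => min (dist u p) (dist v p)) '' P s) ≤
        sInf ((fun p => min (dist u p) (dist v p)) '' P t))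
    (hi : i < m) :
    (volume {p : ℝ × ℝ | p.1 ∈ Ico (0 : ℝ) 1 ∧ p.2 ∈ Ico (1 : ℝ) 2 ∧
        CutsV hk r P σ p.1 p.2 m s i u v}).toReal ≤
      if ∀ t < s, σ.symm s < σ.symm t then dist u v / (2 ^ i / 4) else 0 := by
  split_ifs with hfirst
  swap
  · have hempty : {p : ℝ × ℝ | p.1 ∈ Ico (0 : ℝ) 1 ∧ p.2 ∈ Ico (1 : ℝ) 2 ∧
        CutsV hk r P σ p.1 p.2 m s i u v} = ∅ :=
      eq_empty_of_forall_notMem fun p hp => hfirst fun t ht => hp.2.2.symm_lt_symm hr hord ht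
    rw [hempty, measure_empty, ENNReal.toReal_zero]
  have hδ : (0 : ℝ) < 2 ^ i / 4 := by positivity
  set y₁ := min (dist r u / (2 ^ i / 4)) (dist r v / (2 ^ i / 4))
  set y₂ := max (dist r u / (2 ^ i / 4)) (dist r v / (2 ^ i / 4))
  have hlength : y₂ - y₁ ≤ dist u v / (2 ^ i / 4) := by
    rw [max_sub_min_eq_abs, ← sub_div, abs_div, abs_of_pos hδ, abs_sub_comm, dist_comm r u,
      dist_comm r v]
    exact div_le_div_of_nonneg_right (abs_dist_sub_le u v r) hδ.le
  have hsub : {p : ℝ × ℝ | p.1 ∈ Ico (0 : ℝ) 1 ∧ p.2 ∈ Ico (1 : ℝ) 2 ∧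
      CutsV hk r P σ p.1 p.2 m s i u v} ⊆
      {α : ℝ | α ∈ Ico (0 : ℝ) 1 ∧ ∃ n : ℤ, (n : ℝ) + α ∈ Ioc y₁ y₂} ×ˢ Ico (1 : ℝ) 2 :=
    fun p ⟨hα, hβ, hcut⟩ => ⟨⟨hα, hcut.exists_intCast_add_mem_Ioc hi hα.2⟩, hβ⟩
  refine ENNReal.toReal_le_of_le_ofReal (by positivity) ?_
  calc _ ≤ _ := measure_mono hsub
    _ = volume {α : ℝ | α ∈ Ico (0 : ℝ) 1 ∧ ∃ n : ℤ, (n : ℝ) + α ∈ Ioc y₁ y₂} := by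
        rw [Measure.volume_eq_prod, Measure.prod_prod, Real.volume_Ico]
        norm_num
    _ ≤ volume (Ioc y₁ y₂) := volume_setOf_intCast_add_mem_le measurableSet_Ioc
    _ ≤ _ := by
        rw [Real.volume_Ioc]
        exact ENNReal.ofReal_le_ofReal hlength

end CutsV

theorem statement12_general {k : ℕ} (hk : 0 < k) (r : X) (P : Fin k → Set X) (m : ℕ)
    (hr : ∀ s, r ∈ P s)
    (u v : X)
    (hord : ∀ s t : Fin k, s ≤ t →
      sInf ((fun p => min (dist u p) (dist v p)) '' P s) ≤
        sInf ((fun p => min (dist u p) (dist v p)) '' P t)) :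
    ∀ (s : Fin k) (i : ℕ), i < m →
      PrCutV hk r P m s i u v ≤
        (1 / ((s : ℕ) + 1 : ℝ)) * (dist u v / (2 ^ i / 4)) := by
  intro s i hi
  set B := dist u v / (2 ^ i / 4)
  set G := Finset.univ.filter fun σ : Equiv.Perm (Fin k) => ∀ t < s, σ.symm s < σ.symm t
  have hcount : ((s : ℕ) + 1) * G.card ≤ Fintype.card (Equiv.Perm (Fin k)) := by
    simpa only [Fin.card_Iio, Finset.mem_Iio] using
      card_add_one_mul_card_filter_symm_lt_le (Finset.notMem_Iio_self (b := s))
  have hsum : ∑ σ : Equiv.Perm (Fin k), (volume {p : ℝ × ℝ | p.1 ∈ Ico (0 : ℝ) 1 ∧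
      p.2 ∈ Ico (1 : ℝ) 2 ∧ CutsV hk r P σ p.1 p.2 m s i u v}).toReal ≤ G.card * B :=
    calc _ ≤ ∑ σ : Equiv.Perm (Fin k), if σ ∈ G then B else 0 :=
          Finset.sum_le_sum fun σ _ => by
            simpa only [G, Finset.mem_filter, Finset.mem_univ, true_and] using
              volume_cutsV_toReal_le hr hord hi
      _ = G.card * B := by
          rw [Finset.sum_ite_mem, Finset.univ_inter, Finset.sum_const, nsmul_eq_mul]
  have hG : (G.card : ℝ) ≤ Fintype.card (Equiv.Perm (Fin k)) / ((s : ℕ) + 1 : ℝ) := by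
    rw [le_div_iff₀ (by positivity), mul_comm]
    exact_mod_cast hcount
  unfold PrCutV
  rw [div_le_iff₀ (by exact_mod_cast Fintype.card_pos)]
  calc _ ≤ G.card * B := hsum
    _ ≤ Fintype.card (Equiv.Perm (Fin k)) / ((s : ℕ) + 1 : ℝ) * B := by gcongr
    _ = _ := by ring

/-- Fix `u ≠ v` and assume the paths are indexed so that
`d(P_1,{u,v}) ≤ … ≤ d(P_k,{u,v})`.  Then for every `s` and every level `i ∈ {0,…,m-1}`,
the probability over `(σ, α, β)` that `P s` cuts `{u,v}` vertically at level `i` is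
at most `(1/s) · d u v / 2^(i-2)`. -/
theorem statement12 {k : ℕ} (hk : 0 < k) (r : X) (P : Fin k → Set X) (m : ℕ)
    (hr : ∀ s, r ∈ P s) (hcov : (⋃ s, P s) = Set.univ)
    (hpath : ∀ s, ∀ x ∈ P s, ∀ y ∈ P s, dist x y = |dist r x - dist r y|)
    (hmin : ∀ x y : X, x ≠ y → 1 ≤ dist x y)
    (hm : (m : ℤ) = 2 + ⌈Real.logb 2 (Metric.diam (Set.univ : Set X))⌉)
    (u v : X) (huv : u ≠ v)
    (hord : ∀ s t : Fin k, s ≤ t →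
      sInf ((fun p => min (dist u p) (dist v p)) '' P s) ≤
        sInf ((fun p => min (dist u p) (dist v p)) '' P t)) :
    ∀ (s : Fin k) (i : ℕ), i < m →
      PrCutV hk r P m s i u v ≤
        (1 / ((s : ℕ) + 1 : ℝ)) * (dist u v / (2 ^ i / 4)) :=
  statement12_general hk r P m hr u v hord
end
end

section
/- There is a universal constant c > 0 such that the following holds. Let (Y,d) be a finite metric space and X ⊆ Y such that distinct points of X are at distance at least 1, and every y ∈ Y ∖ X has an attachment point x_y ∈ X with d(y, x_y) = 1/2 and d(y, z) = 1/2 + d(x_y, z) for every z ∈ Y ∖ {y}. If (X,d) admits a stochastic D-embedding into the family of finite tree metrics (D ≥ 1), then (Y,d) admits a stochastic (c·D)-embedding into the family of finite tree metrics. -/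
open Set

noncomputable section

section Aux

lemma FinMetric.dist_nonneg' (Y : FinMetric) (a b : Y.carrier) : 0 ≤ Y.dist a b := by
  letI := Y.metric; exact dist_nonneg

lemma FinMetric.dist_comm' (Y : FinMetric) (a b : Y.carrier) : Y.dist a b = Y.dist b a := by
  letI := Y.metric; exact dist_comm a b

lemma FinMetric.dist_triangle' (Y : FinMetric) (a b c : Y.carrier) :
    Y.dist a c ≤ Y.dist a b + Y.dist b c := by
  letI := Y.metric; exact dist_triangle a b c

end Aux

/-- There is a universal constant `c > 0` such that: if `(Y,d)` is a
finite metric space, `X ⊆ Y` has all its pairwise distances at least `1`, and every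
`y ∈ Y ∖ X` has an attachment point `x ∈ X` with `d y x = 1/2` and
`d y z = 1/2 + d x z` for every `z ≠ y`, then whenever `X` admits a stochastic
`D`-embedding (`D ≥ 1`) into finite tree metrics, so does `Y` with distortion `c·D`. -/
theorem statement15 :
    ∃ c : ℝ, 0 < c ∧
      ∀ (Y : Type) [MetricSpace Y] [Fintype Y] (X : Set Y) (D : ℝ),
        1 ≤ D →
        (∀ x ∈ X, ∀ x' ∈ X, x ≠ x' → 1 ≤ dist x x') →
        (∀ y : Y, y ∉ X → ∃ x ∈ X, dist y x = 1 / 2 ∧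
          ∀ z : Y, z ≠ y → dist y z = 1 / 2 + dist x z) →
        StochEmbed X (fun a b => dist (a : Y) (b : Y)) TreeMetrics D →
        StochEmbed Y dist TreeMetrics (c * D) := by
  classical
  refine ⟨1, one_pos, ?_⟩
  intro Y _ _ X D hD hsep hatt hemb
  obtain ⟨N, T, f, p, hT, hp, hpsum, hnc, hexp⟩ := hemb
  choose att hattX hatt1 hatt2 using hatt
  -- base point in `X` and height of each point of `Y`
  set bse : Y → X := fun y => if hy : y ∈ X then ⟨y, hy⟩ else ⟨att y hy, hattX y hy⟩ with hbse
  set ht : Y → ℝ := fun y => if y ∈ X then 0 else 1 / 2 with hht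
  have ht_nonneg : ∀ y, 0 ≤ ht y := by
    intro y; simp only [hht]; split <;> norm_num
  have hbase_mem : ∀ a : Y, a ∈ X → (bse a : Y) = a := by
    intro a ha; simp [hbse, ha]
  have hdist : ∀ a b : Y, a ≠ b → dist a b = ht a + ht b + dist (bse a : Y) (bse b : Y) := by
    intro a b hab
    by_cases ha : a ∈ X <;> by_cases hb : b ∈ X
    · simp [hbse, hht, ha, hb]
    · have := hatt2 b hb a hab
      simp only [hbse, hht, ha, hb, dif_pos, dif_neg, if_pos, if_neg, not_false_iff]
      rw [dist_comm a b, this, dist_comm]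
      ring
    · have := hatt2 a ha b hab.symm
      simp only [hbse, hht, ha, hb, dif_pos, dif_neg, if_pos, if_neg, not_false_iff]
      rw [this, dist_comm (att a ha) b]
      ring
    · have h1 := hatt2 a ha b hab.symm
      have h2 : (att a ha : Y) ≠ b := by
        intro h; exact hb (h ▸ hattX a ha)
      have h3 := hatt2 b hb (att a ha) h2
      simp only [hbse, hht, ha, hb, dif_neg, if_neg, not_false_iff]
      rw [h1, dist_comm (att a ha) b, h3, dist_comm (att b hb) (att a ha)]
      ring
  -- the new distance on `Y` for each tree `T i`
  set Di : Fin N → Y → Y → ℝ := fun i a b =>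
    if a = b then 0 else ht a + ht b + (T i).dist (f i (bse a)) (f i (bse b)) with hDi
  have hge : ∀ i (a b : Y), dist a b ≤ Di i a b := by
    intro i a b
    by_cases hab : a = b
    · simp [hDi, hab]
    · simp only [hDi, if_neg hab]
      rw [hdist a b hab]
      have := hnc i (bse a) (bse b)
      linarith
  have hDnn : ∀ i (a b : Y), 0 ≤ Di i a b := fun i a b => le_trans dist_nonneg (hge i a b)
  have hDself : ∀ i (a : Y), Di i a a = 0 := by intro i a; simp [hDi]
  have hDsymm : ∀ i (a b : Y), Di i a b = Di i b a := by
    intro i a b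
    by_cases hab : a = b
    · simp [hab]
    · simp only [hDi, if_neg hab, if_neg (Ne.symm hab)]
      rw [(T i).dist_comm']
      ring
  have hDtri : ∀ i (a b c : Y), Di i a c ≤ Di i a b + Di i b c := by
    intro i a b c
    by_cases hac : a = c
    · rw [hac, hDself]
      exact add_nonneg (hDnn i _ _) (hDnn i _ _)
    by_cases hab : a = b
    · rw [hab, hDself]; linarith
    by_cases hbc : b = c
    · rw [hbc, hDself]; linarith
    simp only [hDi, if_neg hac, if_neg hab, if_neg hbc]
    have := (T i).dist_triangle' (f i (bse a)) (f i (bse b)) (f i (bse c))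
    have := ht_nonneg b
    linarith
  have hDpos : ∀ i (a b : Y), a ≠ b → Di i a b ≠ 0 := by
    intro i a b hab h
    exact hab (eq_of_dist_eq_zero (le_antisymm (h ▸ hge i a b) dist_nonneg))
  -- the extended metric spaces
  set M : Fin N → MetricSpace Y := fun i =>
    { dist := Di i
      dist_self := hDself i
      dist_comm := hDsymm i
      dist_triangle := hDtri i
      eq_of_dist_eq_zero := by
        intro a b h
        by_contra hab
        exact hDpos i a b hab h } with hM
  set Z : Fin N → FinMetric := fun i => ⟨Y, inferInstance, M i⟩ with hZ
  have hZdist : ∀ i (a b : Y), (Z i).dist a b = Di i a b := fun _ _ _ => rfl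
  refine ⟨N, Z, fun i y => y, p, ?_, hp, hpsum, ?_, ?_⟩
  · -- each `Z i` is a tree metric
    intro i
    intro w x y z
    simp only [hZdist]
    by_cases hwx : w = x
    · subst hwx
      rw [hDself, zero_add]
      refine le_max_of_le_left ?_
      calc Di i y z ≤ Di i y w + Di i w z := hDtri i y w z
        _ = Di i w y + Di i w z := by rw [hDsymm]
    by_cases hyz : y = z
    · subst hyz
      rw [hDself, add_zero]
      refine le_max_of_le_left ?_
      calc Di i w x ≤ Di i w y + Di i y x := hDtri i w y x
        _ = Di i w y + Di i x y := by rw [hDsymm i y x]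
    by_cases hwy : w = y
    · subst hwy
      refine le_max_of_le_right ?_
      rw [hDsymm i x w]
      linarith [hDsymm i w x]
    by_cases hxz : x = z
    · subst hxz
      refine le_max_of_le_right ?_
      rw [hDsymm i y x]
    by_cases hwz : w = z
    · subst hwz
      refine le_max_of_le_left ?_
      rw [hDsymm i y w, hDsymm i x w]
      linarith
    by_cases hxy : x = y
    · subst hxy
      exact le_max_left _ _
    -- all four points distinct
    have ft := hT i (f i (bse w)) (f i (bse x)) (f i (bse y)) (f i (bse z))
    simp only [hDi, if_neg hwx, if_neg hyz, if_neg hwy, if_neg hxz, if_neg hwz, if_neg hxy]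
    rcases le_max_iff.1 ft with h | h
    · exact le_max_of_le_left (by linarith)
    · exact le_max_of_le_right (by linarith)
  · -- non-contracting
    intro i a b
    rw [hZdist]
    exact hge i a b
  · -- expansion bound
    intro a b
    by_cases hab : a = b
    · simp [hab, hZdist, hDself]
    have hsum : (∑ i, p i * (Z i).dist a b)
        = (ht a + ht b) + ∑ i, p i * (T i).dist (f i (bse a)) (f i (bse b)) := by
      have : ∀ i ∈ Finset.univ, p i * (Z i).dist a b
          = p i * (ht a + ht b) + p i * (T i).dist (f i (bse a)) (f i (bse b)) := by
        intro i _
        rw [hZdist]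
        simp only [hDi, if_neg hab]
        ring
      rw [Finset.sum_congr rfl this, Finset.sum_add_distrib, ← Finset.sum_mul, hpsum, one_mul]
    rw [hsum, hdist a b hab]
    have hexp' := hexp (bse a) (bse b)
    have hC : 0 ≤ ht a + ht b := add_nonneg (ht_nonneg a) (ht_nonneg b)
    have hDC : ht a + ht b ≤ D * (ht a + ht b) := le_mul_of_one_le_left hC hD
    have hdnn : (0:ℝ) ≤ dist (bse a : Y) (bse b : Y) := dist_nonneg
    nlinarith [hexp']
end
end

section
/- Let X be a finite metric space admitting a stochastic D-embedding into a family 𝒴 of finite metric spaces (D ≥ 1), and let α ≥ 1. Suppose every Y ∈ 𝒴 admits a map g_Y into some finite-dimensional ℓ₁ space with distortion α, i.e. d_Y(x,y) ≤ ‖g_Y(x) − g_Y(y)‖₁ ≤ α·d_Y(x,y) for all x,y ∈ Y. Then X admits a map g into some finite-dimensional ℓ₁ space with d(x,y) ≤ ‖g(x) − g(y)‖₁ ≤ α·D·d(x,y) for all x,y ∈ X. -/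
open Set

noncomputable section

/-- If `X` admits a stochastic `D`-embedding into a family `𝒴` (`D ≥ 1`),
and every `Y ∈ 𝒴` embeds into some finite-dimensional `ℓ₁` space with distortion `α ≥ 1`,
then `X` embeds into some finite-dimensional `ℓ₁` space with distortion `α·D` (with the
non-contracting normalization). -/
theorem statement17 (X : Type) [MetricSpace X] [Fintype X]
    (𝒴 : Set FinMetric) (D α : ℝ) (hD : 1 ≤ D) (hα : 1 ≤ α)
    (hX : StochEmbed X dist 𝒴 D)
    (h𝒴 : ∀ Y ∈ 𝒴, ∃ (n : ℕ) (g : Y.carrier → (Fin n → ℝ)),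
      ∀ x y : Y.carrier,
        Y.dist x y ≤ (∑ j, |g x j - g y j|) ∧ (∑ j, |g x j - g y j|) ≤ α * Y.dist x y) :
    ∃ (n : ℕ) (g : X → (Fin n → ℝ)),
      ∀ x y : X,
        dist x y ≤ (∑ j, |g x j - g y j|) ∧ (∑ j, |g x j - g y j|) ≤ α * D * dist x y := by
  obtain ⟨N, Y, f, p, hYmem, hp0, hp1, hlow, hup⟩ := hX
  choose n g hg using fun i => h𝒴 (Y i) (hYmem i)
  let e := Fintype.equivFin (Σ i : Fin N, Fin (n i))
  refine ⟨Fintype.card (Σ i : Fin N, Fin (n i)),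
    fun x j => p (e.symm j).1 * g (e.symm j).1 (f (e.symm j).1 x) (e.symm j).2,
    fun x y => ?_⟩
  have key : (∑ j, |p (e.symm j).1 * g (e.symm j).1 (f (e.symm j).1 x) (e.symm j).2
      - p (e.symm j).1 * g (e.symm j).1 (f (e.symm j).1 y) (e.symm j).2|)
      = ∑ i, p i * ∑ k, |g i (f i x) k - g i (f i y) k| := by
    rw [e.symm.sum_comp (fun s : Σ i : Fin N, Fin (n i) =>
      |p s.1 * g s.1 (f s.1 x) s.2 - p s.1 * g s.1 (f s.1 y) s.2|),
      ← Finset.univ_sigma_univ, Finset.sum_sigma]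
    refine Finset.sum_congr rfl fun i _ => ?_
    rw [Finset.mul_sum]
    refine Finset.sum_congr rfl fun k _ => ?_
    rw [← mul_sub, abs_mul, abs_of_nonneg (hp0 i)]
  rw [key]
  constructor
  · calc dist x y = ∑ i, p i * dist x y := by rw [← Finset.sum_mul, hp1, one_mul]
      _ ≤ ∑ i, p i * (Y i).dist (f i x) (f i y) :=
        Finset.sum_le_sum fun i _ => mul_le_mul_of_nonneg_left (hlow i x y) (hp0 i)
      _ ≤ ∑ i, p i * ∑ k, |g i (f i x) k - g i (f i y) k| :=
        Finset.sum_le_sum fun i _ => mul_le_mul_of_nonneg_left ((hg i _ _).1) (hp0 i)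
  · calc ∑ i, p i * ∑ k, |g i (f i x) k - g i (f i y) k|
        ≤ ∑ i, p i * (α * (Y i).dist (f i x) (f i y)) :=
        Finset.sum_le_sum fun i _ => mul_le_mul_of_nonneg_left ((hg i _ _).2) (hp0 i)
      _ = α * ∑ i, p i * (Y i).dist (f i x) (f i y) := by
        rw [Finset.mul_sum]; exact Finset.sum_congr rfl fun i _ => by ring
      _ ≤ α * (D * dist x y) := mul_le_mul_of_nonneg_left (hup x y) (by linarith)
      _ = α * D * dist x y := by ring
end
end
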